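/- arXiv:math/0602319 — 5 statements merged into one kernel-verified Lean document; each statement's English description precedes it below -/
import Mathlib

section
/- Let G be a connected k-regular finite simple graph on n vertices, where k ≥ 1 is odd. Then G is (nk/2 − 1)-approximately magic; that is, there exists a bijection f from the edge set of G to {1, 2, ..., nk/2} such that the difference between the largest vertex sum and the smallest vertex sum is at most nk/2 − 1. -/
/-!
Join a new vertex to every vertex of `G`. As `n` is even and every degree `k + 1` is even, the
resulting graph has an Euler circuit; cutting it at the new vertex splits the edges of `G` into
`n / 2` trails such that every vertex is an end of exactly one trail. The trails have average
length `k = 2h + 1`, so one of them, `T`, has at least `2h + 1` edges. List the `m = nk / 2`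
edges trail by trail, starting with `T`, and label them in this order by `m, 1, m - 1, 2, …`.
Consecutive labels then sum to `m` or `m + 1`, and the labels `1, …, h` sit at positions
`1, 3, …, 2h - 1`, strictly inside `T`, so the first and last edges of every trail have labels in
`[h + 1, m]`. A vertex is passed through `h` times and is an end once, so its vertex sum lies in
`[hm + h + 1, hm + h + m]`.
-/

/-- The vertex sum at `v` under an edge labeling `f`: the sum of the labels of all
edges incident with `v`. -/
noncomputable def vertexSum {V : Type*} [Finite V] (G : SimpleGraph V)
    (f : Sym2 V → ℕ) (v : V) : ℕ :=
  ∑ e ∈ (G.incidenceSet v).toFinite.toFinset, f e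

/-- A graph is antimagic if there is a bijection from its edge set to `{1, ..., m}`
(`m` = number of edges) such that all vertex sums are pairwise distinct. -/
def IsAntimagic {V : Type*} [Finite V] (G : SimpleGraph V) : Prop :=
  ∃ f : Sym2 V → ℕ,
    Set.BijOn f G.edgeSet (Set.Icc 1 (Nat.card G.edgeSet)) ∧
    ∀ u v : V, u ≠ v → vertexSum G f u ≠ vertexSum G f v

def snake (m i : ℕ) : ℕ := if i % 2 = 0 then m - i / 2 else (i + 1) / 2

section Snake

variable {m : ℕ}

theorem snake_add_snake_succ {i : ℕ} (hi : i + 1 < m) :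
    m ≤ snake m i + snake m (i + 1) ∧ snake m i + snake m (i + 1) ≤ m + 1 := by
  unfold snake; split_ifs <;> omega

theorem mem_map_snake_range {y : ℕ} : y ∈ (List.range m).map (snake m) ↔ y ∈ Set.Icc 1 m := by
  simp only [List.mem_map, List.mem_range, Set.mem_Icc]
  constructor
  · rintro ⟨i, hi, rfl⟩
    unfold snake; split_ifs <;> omega
  · rintro ⟨h1, h2⟩
    refine ⟨if 2 * y ≤ m then 2 * y - 1 else 2 * (m - y), ?_, ?_⟩
    · split_ifs <;> omega
    · unfold snake; split_ifs <;> omega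

theorem nodup_map_snake_range : ((List.range m).map (snake m)).Nodup :=
  (List.nodup_range).map_on fun i hi j hj => by
    simp only [List.mem_range] at hi hj; unfold snake; split_ifs <;> omega

theorem isChain_map_snake_range :
    ((List.range m).map (snake m)).IsChain fun x y => m ≤ x + y ∧ x + y ≤ m + 1 := by
  rw [List.isChain_map, List.isChain_range]
  intro i hi
  exact snake_add_snake_succ (by omega)

theorem snake_mem_Icc {h i : ℕ} (hm : 2 * h + 1 ≤ m) (hi : i < m) (h0 : i = 0 ∨ 2 * h ≤ i) :
    snake m i ∈ Set.Icc (h + 1) m := by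
  rw [Set.mem_Icc]; unfold snake; split_ifs <;> omega

theorem snake_bounds_of_append_eq {h : ℕ} {L₀ L₁ : List ℕ}
    (hsplit : (List.range m).map (snake m) = L₀ ++ L₁) (hlen : 2 * h + 1 ≤ L₀.length) :
    (∀ y ∈ L₀.head?, h + 1 ≤ y ∧ y ≤ m) ∧ (∀ y ∈ L₀.getLast?, h + 1 ≤ y ∧ y ≤ m) ∧
      ∀ y ∈ L₁, h + 1 ≤ y ∧ y ≤ m := by
  have hm : L₀.length ≤ m := by
    have := congrArg List.length hsplit
    simp only [List.length_map, List.length_range, List.length_append] at this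
    omega
  have hL₀ : L₀ = (List.range L₀.length).map (snake m) := by
    conv_lhs => rw [← List.take_left' (l₁ := L₀) (l₂ := L₁) rfl, ← hsplit]
    rw [← List.map_take, List.take_range, Nat.min_eq_left hm]
  have hL₁ : L₁ = ((List.range m).map (snake m)).drop L₀.length := by
    rw [hsplit, List.drop_left' rfl]
  refine ⟨fun y hy => ?_, fun y hy => ?_, fun y hy => ?_⟩
  · rw [hL₀, List.head?_map, List.head?_range, if_neg (by omega)] at hy
    obtain rfl := Option.some.inj hy
    exact snake_mem_Icc (by omega) (by omega) (Or.inl rfl)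
  · rw [hL₀, List.getLast?_map, List.getLast?_range, if_neg (by omega)] at hy
    obtain rfl := Option.some.inj hy
    exact snake_mem_Icc (by omega) (by omega) (Or.inr (by omega))
  · rw [hL₁, List.mem_drop_iff_getElem] at hy
    obtain ⟨j, hj, rfl⟩ := hy
    simp only [List.length_map, List.length_range] at hj
    simp only [List.getElem_map, List.getElem_range]
    exact snake_mem_Icc (by omega) (by omega) (Or.inr (by omega))

end Snake

theorem List.exists_map_eq_of_nodup {α β : Type*} [DecidableEq α] [Inhabited β] {l : List α}
    {l' : List β} (hl : l.Nodup) (hlen : l.length = l'.length) : ∃ f : α → β, l.map f = l' :=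
  ⟨fun a => l'.getD (l.idxOf a) default, List.ext_getElem (by simp [hlen]) fun i h₁ h₂ => by
    simp [hl.idxOf_getElem, h₂]⟩

theorem List.bijOn_of_map_eq {α β : Type*} {l : List α} {l' : List β} {f : α → β}
    (hf : l.map f = l') (hl' : l'.Nodup) : Set.BijOn f {a | a ∈ l} {b | b ∈ l'} := by
  subst hf
  refine ⟨fun a ha => List.mem_map_of_mem ha, fun a ha b hb => List.inj_on_of_nodup_map hl' ha hb,
    fun b hb => ?_⟩
  obtain ⟨a, ha, rfl⟩ := List.mem_map.1 hb
  exact ⟨a, ha, rfl⟩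

theorem List.exists_sum_bounds {α : Type*} {l : List α} {a e s : α → ℕ} {P Q A B : ℕ}
    (h : ∀ t ∈ l, ∃ c, a t = 2 * c + e t ∧ P * c + A * e t ≤ s t ∧ s t ≤ Q * c + B * e t) :
    ∃ C, (l.map a).sum = 2 * C + (l.map e).sum ∧ P * C + A * (l.map e).sum ≤ (l.map s).sum ∧
      (l.map s).sum ≤ Q * C + B * (l.map e).sum := by
  induction l with
  | nil => exact ⟨0, by simp⟩
  | cons t l ih =>
    obtain ⟨c, hc⟩ := h t (List.mem_cons_self ..)
    obtain ⟨C, hC⟩ := ih fun t ht => h t (List.mem_cons_of_mem _ ht)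
    refine ⟨c + C, ?_⟩
    simp only [List.map_cons, List.sum_cons, Nat.mul_add]
    omega

namespace SimpleGraph

variable {V : Type*} {G : SimpleGraph V}

theorem exists_longest_trail [Fintype V] [DecidableRel G.Adj] [Nonempty V] :
    ∃ (u w : V) (p : G.Walk u w), p.IsTrail ∧
      ∀ (u' w' : V) (q : G.Walk u' w'), q.IsTrail → q.length ≤ p.length := by
  classical
  let P : ℕ → Prop := fun n => ∃ (u w : V) (p : G.Walk u w), p.IsTrail ∧ p.length = n
  obtain ⟨u, w, p, hp, hlen⟩ : P (Nat.findGreatest P G.edgeFinset.card) :=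
    Nat.findGreatest_spec (Nat.zero_le _) ⟨Classical.arbitrary V, _, .nil, by simp, rfl⟩
  exact ⟨u, w, p, hp, fun u' w' q hq =>
    hlen ▸ Nat.le_findGreatest hq.length_le_card_edgeFinset ⟨u', w', q, hq, rfl⟩⟩

def apex (G : SimpleGraph V) : SimpleGraph (Option V) where
  Adj
    | some u, some v => G.Adj u v
    | some _, none | none, some _ => True
    | none, none => False
  symm := ⟨by rintro (_ | u) (_ | v) h <;> first | trivial | exact h.symm⟩
  loopless := ⟨by rintro (_ | u) h <;> first | exact h | exact G.loopless.irrefl u h⟩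

@[simp] theorem apex_adj_some_some {u v : V} : (apex G).Adj (some u) (some v) ↔ G.Adj u v :=
  Iff.rfl

@[simp] theorem apex_adj_none_some {v : V} : (apex G).Adj none (some v) := trivial

@[simp] theorem apex_adj_some_none {v : V} : (apex G).Adj (some v) none := trivial

@[simp] theorem not_apex_adj_none_none : ¬(apex G).Adj none none := id

instance [DecidableRel G.Adj] : DecidableRel (apex G).Adj
  | some u, some v => inferInstanceAs (Decidable (G.Adj u v))
  | some _, none | none, some _ => isTrue trivial
  | none, none => isFalse id

theorem apex_connected : (apex G).Connected :=
  (connected_iff_exists_forall_reachable _).2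
    ⟨none, by rintro (_ | v); exacts [.refl _, apex_adj_none_some.reachable]⟩

theorem apex_degree_some [Fintype V] [DecidableRel G.Adj] (v : V) :
    (apex G).degree (some v) = G.degree v + 1 := by
  rw [← card_neighborFinset_eq_degree, ← card_neighborFinset_eq_degree, ← Finset.card_insertNone]
  congr 1
  ext (_ | u) <;> simp [Finset.mem_insertNone]

theorem apex_degree_none [Fintype V] [DecidableRel G.Adj] :
    (apex G).degree none = Fintype.card V := by
  rw [← card_neighborFinset_eq_degree, ← Finset.card_univ,
    ← Finset.card_map (Function.Embedding.some (α := V))]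
  congr 1
  ext (_ | u) <;> simp

variable [DecidableEq V]

theorem Walk.IsEulerian.rotate {u v : V} {c : G.Walk v v} (hc : c.IsEulerian)
    (hu : u ∈ c.support) : (c.rotate u hu).IsEulerian :=
  fun e he => ((c.rotate_edges u hu).perm.count_eq e).trans (hc e he)

theorem mem_filter_iff_mem_incidenceSet {es : List (Sym2 V)} {v : V}
    (hsub : ∀ e ∈ es, e ∈ G.edgeSet) (hinc : ∀ e ∈ G.incidenceSet v, e ∈ es) (e : Sym2 V) :
    e ∈ es.filter (v ∈ ·) ↔ e ∈ G.incidenceSet v := by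
  simp only [List.mem_filter, decide_eq_true_eq]
  exact ⟨fun h => ⟨hsub e h.1, h.2⟩, fun h => ⟨hinc e h, h.2⟩⟩

theorem countP_mem_eq_degree [Fintype V] [DecidableRel G.Adj] {es : List (Sym2 V)} {v : V}
    (hnd : es.Nodup) (hsub : ∀ e ∈ es, e ∈ G.edgeSet) (hinc : ∀ e ∈ G.incidenceSet v, e ∈ es) :
    es.countP (v ∈ ·) = G.degree v := by
  rw [← card_incidenceFinset_eq_degree, List.countP_eq_length_filter,
    ← List.toFinset_card_of_nodup (hnd.filter _)]
  congr 1
  ext e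
  rw [List.mem_toFinset, mem_filter_iff_mem_incidenceSet hsub hinc, mem_incidenceFinset]

theorem Walk.IsTrail.exists_adj_not_mem_edges [Fintype V] [DecidableRel G.Adj] {u w v : V}
    {p : G.Walk u w} (hp : p.IsTrail) (h : p.edges.countP (v ∈ ·) ≠ G.degree v) :
    ∃ y, G.Adj v y ∧ s(v, y) ∉ p.edges := by
  by_contra! hall
  refine h (countP_mem_eq_degree hp.edges_nodup (fun _ h => p.edges_subset_edgeSet h)
    fun e he => ?_)
  obtain ⟨y, rfl⟩ := Sym2.mem_iff_exists.1 he.2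
  exact hall y he.1

theorem Connected.exists_mem_support_adj_not_mem_edges (hconn : G.Connected) {u w : V}
    (p : G.Walk u w) {e : Sym2 V} (he : e ∈ G.edgeSet) (hne : e ∉ p.edges) :
    ∃ x ∈ p.support, ∃ y, G.Adj x y ∧ s(x, y) ∉ p.edges := by
  suffices H : ∀ {a z : V} (W : G.Walk a z), z ∈ p.support → ∀ b, G.Adj a b →
      s(a, b) ∉ p.edges → ∃ x ∈ p.support, ∃ y, G.Adj x y ∧ s(x, y) ∉ p.edges by
    induction e using Sym2.ind with
    | h a b => exact H (hconn.preconnected a u).some p.start_mem_support b he hne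
  intro a z W
  induction W with
  | nil => exact fun hz b hab hn => ⟨_, hz, b, hab, hn⟩
  | @cons a a' z hadj W ih =>
    intro hz b hab hn
    by_cases ha : a ∈ p.support
    · exact ⟨a, ha, b, hab, hn⟩
    · exact ih hz a hadj.symm fun hmem => ha (p.snd_mem_support_of_mem_edges hmem)

/-- A longest trail is closed: an open trail uses an odd number of edges at its start, so it can be
extended there. It uses every edge: otherwise, by connectedness, an unused edge leaves a vertex
it visits, and rotating the trail to start there lets it be extended. -/
theorem Connected.exists_isEulerian [Fintype V] [DecidableRel G.Adj] (hconn : G.Connected)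
    (heven : ∀ v, Even (G.degree v)) : ∃ (u : V) (p : G.Walk u u), p.IsEulerian := by
  have := hconn.nonempty
  obtain ⟨u, w, p, hp, hmax⟩ := exists_longest_trail (G := G)
  obtain rfl : u = w := by
    by_contra huw
    obtain ⟨y, hadj, hy⟩ := hp.exists_adj_not_mem_edges (v := u) fun h =>
      ((hp.even_countP_edges_iff u).1 (h ▸ heven u) huw).1 rfl
    have := hmax _ _ (.cons hadj.symm p) (by simpa [Walk.isTrail_cons, hp, Sym2.eq_swap] using hy)
    simp at this
  refine ⟨u, p, hp.isEulerian_of_forall_mem fun e he => by_contra fun hne => ?_⟩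
  obtain ⟨x, hx, y, hadj, hy⟩ := hconn.exists_mem_support_adj_not_mem_edges p he hne
  have := hmax _ _ (.cons hadj.symm (p.rotate x hx)) <| by
    simpa [Walk.isTrail_cons, hp.rotate hx, Sym2.eq_swap, (p.rotate_edges x hx).perm.mem_iff]
      using hy
  simp at this

structure BundledWalk (G : SimpleGraph V) where
  start : V
  finish : V
  walk : G.Walk start finish

structure IsTrailDecomposition (D : List G.BundledWalk) : Prop where
  count_edges : ∀ e ∈ G.edgeSet, (D.flatMap (·.walk.edges)).count e = 1
  count_ends : ∀ v, (D.flatMap fun t => [t.start, t.finish]).count v = 1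

namespace IsTrailDecomposition

variable {D D' : List G.BundledWalk} (hD : IsTrailDecomposition D)
include hD

theorem perm (hp : D.Perm D') : IsTrailDecomposition D' :=
  ⟨fun e he => (hp.flatMap_right _).count_eq e ▸ hD.count_edges e he,
    fun v => (hp.flatMap_right _).count_eq v ▸ hD.count_ends v⟩

theorem mem_edges_iff {e : Sym2 V} : e ∈ D.flatMap (·.walk.edges) ↔ e ∈ G.edgeSet := by
  refine ⟨fun h => ?_, fun h => List.count_pos_iff.1 (by rw [hD.count_edges e h]; omega)⟩
  obtain ⟨t, -, ht⟩ := List.mem_flatMap.1 h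
  exact t.walk.edges_subset_edgeSet ht

theorem nodup_edges : (D.flatMap (·.walk.edges)).Nodup :=
  List.nodup_iff_count_eq_one.2 fun e he => hD.count_edges e (hD.mem_edges_iff.1 he)

theorem start_ne_finish {t : G.BundledWalk} (ht : t ∈ D) : t.start ≠ t.finish := by
  intro heq
  have hsub : List.Sublist [t.start, t.finish] (D.flatMap fun t => [t.start, t.finish]) := by
    rw [List.flatMap_def]
    exact (List.infix_of_mem_flatten
      (List.mem_map_of_mem (f := fun t => [t.start, t.finish]) ht)).sublist
  have := hD.count_ends t.start ▸ hsub.count_le t.start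
  simp [heq] at this

theorem length_edges [Fintype V] [DecidableRel G.Adj] :
    (D.flatMap (·.walk.edges)).length = G.edgeFinset.card := by
  rw [← List.toFinset_card_of_nodup hD.nodup_edges]
  congr 1
  ext e
  rw [List.mem_toFinset, hD.mem_edges_iff, mem_edgeFinset]

theorem two_mul_length [Fintype V] : 2 * D.length = Fintype.card V := by
  have hnd : (D.flatMap fun t => [t.start, t.finish]).Nodup :=
    List.nodup_iff_count_eq_one.2 fun v _ => hD.count_ends v
  calc 2 * D.length = (D.flatMap fun t => [t.start, t.finish]).length := by
        simp [List.length_flatMap, mul_comm]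
    _ = Fintype.card V := by
        rw [← List.toFinset_card_of_nodup hnd, ← Finset.card_univ]
        congr 1
        ext v
        simp [← List.count_pos_iff, hD.count_ends]

theorem countP_edges [Fintype V] [DecidableRel G.Adj] (v : V) :
    (D.flatMap (·.walk.edges)).countP (v ∈ ·) = G.degree v :=
  countP_mem_eq_degree hD.nodup_edges (fun _ => hD.mem_edges_iff.1) fun _ he =>
    hD.mem_edges_iff.2 he.1

end IsTrailDecomposition

/-- Cutting a walk of `apex G` at its visits to `none` yields walks in `G`; a walk starting at
`some u` continues the walk `w` of `G` that has reached `u`. -/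
theorem exists_split_apex_walk : ∀ {x y : Option V} (p : (apex G).Walk x y), y = none →
    (x = none → ∃ D : List G.BundledWalk,
      (D.flatMap (·.walk.edges)).map (Sym2.map some) = p.edges.filter (none ∉ ·) ∧
      (D.flatMap fun t => [t.start, t.finish]).map (fun v => s(none, some v)) =
        p.edges.filter (none ∈ ·)) ∧
    (∀ (a u : V) (w : G.Walk a u), x = some u → ∃ D : List G.BundledWalk,
      (D.flatMap (·.walk.edges)).map (Sym2.map some) =
        w.edges.map (Sym2.map some) ++ p.edges.filter (none ∉ ·) ∧
      (D.flatMap fun t => [t.start, t.finish]).map (fun v => s(none, some v)) =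
        s(none, some a) :: p.edges.filter (none ∈ ·)) := by
  intro x y p
  induction p with
  | nil =>
    rintro rfl
    exact ⟨fun _ => ⟨[], by simp⟩, fun _ _ _ h => absurd h (by simp)⟩
  | @cons x z y hadj q ih =>
    intro hy
    obtain ⟨ihn, ihs⟩ := ih hy
    refine ⟨?_, ?_⟩
    · rintro rfl
      obtain _ | u' := z
      · exact absurd hadj not_apex_adj_none_none
      obtain ⟨D, hE, hV⟩ := ihs u' u' .nil rfl
      exact ⟨D, by simpa using hE, by simpa using hV⟩
    · rintro a u w rfl
      obtain _ | u' := z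
      · obtain ⟨D, hE, hV⟩ := ihn rfl
        refine ⟨⟨a, u, w⟩ :: D, ?_, ?_⟩
        · simpa using hE
        · simpa [Sym2.eq_swap] using hV
      · obtain ⟨D, hE, hV⟩ := ihs a u' (w.concat (apex_adj_some_some.1 hadj)) rfl
        refine ⟨D, ?_, by simpa using hV⟩
        rw [Walk.edges_concat] at hE
        simpa using hE

theorem exists_isTrailDecomposition [Fintype V] [DecidableRel G.Adj]
    (hodd : ∀ v, Odd (G.degree v)) (hcard : Even (Fintype.card V)) :
    ∃ D : List G.BundledWalk, IsTrailDecomposition D := by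
  rcases isEmpty_or_nonempty V with hV | ⟨⟨v₀⟩⟩
  · exact ⟨[], fun e => by induction e using Sym2.ind with | h a => exact isEmptyElim a,
      fun v => isEmptyElim v⟩
  obtain ⟨u, p, hp⟩ := apex_connected.exists_isEulerian (G := apex G) fun
    | none => by rwa [apex_degree_none]
    | some v => by rw [apex_degree_some]; exact (hodd v).add_one
  have hv₀ : s(none, some v₀) ∈ (apex G).edgeSet := (mem_edgeSet _).2 apex_adj_none_some
  have hnone : none ∈ p.support := p.fst_mem_support_of_mem_edges (hp.mem_edges_iff.2 hv₀)
  obtain ⟨D, hE, hV⟩ := (exists_split_apex_walk (p.rotate none hnone) rfl).1 rfl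
  have hp' := hp.rotate hnone
  refine ⟨D, fun e he => ?_, fun v => ?_⟩
  · rw [← List.count_map_of_injective _ _ (Sym2.map.injective (Option.some_injective V)), hE,
      List.count_filter (by simp), hp' _]
    induction e using Sym2.ind with
    | h a b => simpa using he
  · rw [← List.count_map_of_injective _ (fun v => s(none, some v)) (fun a b h => by simpa using h),
      hV, List.count_filter (by simp), hp' _ ((mem_edgeSet _).2 apex_adj_none_some)]

theorem IsTrailDecomposition.exists_le_length [Fintype V] [DecidableRel G.Adj] [Nonempty V]
    {D : List G.BundledWalk} (hD : IsTrailDecomposition D) {d : ℕ}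
    (hdeg : ∀ v, G.degree v = d) : ∃ t ∈ D, d ≤ t.walk.length := by
  have hlen := hD.two_mul_length
  have hne : D ≠ [] := by
    rintro rfl
    exact (Fintype.card_pos (α := V)).ne (by simpa using hlen)
  refine List.exists_le_of_sum_le hne _ _ ?_
  have hsum := G.sum_degrees_eq_twice_card_edges
  simp only [hdeg, Finset.sum_const, Finset.card_univ, smul_eq_mul] at hsum
  rw [← hD.length_edges, List.length_flatMap, ← hlen] at hsum
  simp only [Walk.length_edges] at hsum
  simp only [List.map_const', List.sum_replicate, smul_eq_mul]
  linarith

def incidentLabelSum (f : Sym2 V → ℕ) (v : V) (es : List (Sym2 V)) : ℕ :=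
  ((es.filter (v ∈ ·)).map f).sum

@[simp] theorem incidentLabelSum_nil (f : Sym2 V → ℕ) (v : V) : incidentLabelSum f v [] = 0 := rfl

theorem incidentLabelSum_cons (f : Sym2 V → ℕ) (v : V) (e : Sym2 V) (es : List (Sym2 V)) :
    incidentLabelSum f v (e :: es) = (if v ∈ e then f e else 0) + incidentLabelSum f v es := by
  by_cases hv : v ∈ e <;> simp [incidentLabelSum, hv]

theorem incidentLabelSum_append (f : Sym2 V → ℕ) (v : V) (es es' : List (Sym2 V)) :
    incidentLabelSum f v (es ++ es') = incidentLabelSum f v es + incidentLabelSum f v es' := by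
  simp [incidentLabelSum]

theorem incidentLabelSum_flatMap {α : Type*} (f : Sym2 V → ℕ) (v : V) (D : List α)
    (g : α → List (Sym2 V)) :
    incidentLabelSum f v (D.flatMap g) = (D.map fun t => incidentLabelSum f v (g t)).sum := by
  induction D with
  | nil => rfl
  | cons t D ih =>
    simp only [List.flatMap_cons, incidentLabelSum_append, ih, List.map_cons, List.sum_cons]

theorem vertexSum_eq_incidentLabelSum [Fintype V] {es : List (Sym2 V)} (hnd : es.Nodup)
    (hes : ∀ e, e ∈ es ↔ e ∈ G.edgeSet) (f : Sym2 V → ℕ) (v : V) :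
    vertexSum G f v = incidentLabelSum f v es := by
  rw [vertexSum, incidentLabelSum, ← List.sum_toFinset _ (hnd.filter _)]
  congr 1
  ext e
  rw [Set.Finite.mem_toFinset, List.mem_toFinset,
    mem_filter_iff_mem_incidenceSet (fun e => (hes e).1) (fun e he => (hes e).2 he.1)]

/-- `c` counts the passages of `w` through `v` strictly between its ends; each contributes the
labels of two consecutive edges. -/
theorem Walk.incidentLabelSum_bounds {a b : V} (w : G.Walk a b) (f : Sym2 V → ℕ)
    {P Q A B x₀ : ℕ} (hchain : (w.edges.map f).IsChain fun x y => P ≤ x + y ∧ x + y ≤ Q)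
    (hhead : (w.edges.map f).head? = some x₀)
    (hlast : ∀ y ∈ (w.edges.map f).getLast?, A ≤ y ∧ y ≤ B) (v : V) :
    ∃ c, w.edges.countP (v ∈ ·) = 2 * c + (if v = a then 1 else 0) + (if v = b then 1 else 0) ∧
      P * c + (if v = a then x₀ else 0) + (if v = b then A else 0) ≤ incidentLabelSum f v w.edges ∧
      incidentLabelSum f v w.edges ≤
        Q * c + (if v = a then x₀ else 0) + (if v = b then B else 0) := by
  induction w generalizing x₀ with
  | nil => simp at hhead
  | @cons u u' b hadj w ih =>
    have hne : u ≠ u' := hadj.ne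
    simp only [Walk.edges_cons, List.map_cons, List.head?_cons, Option.some.injEq]
      at hchain hhead hlast
    subst hhead
    simp only [Walk.edges_cons, List.countP_cons, incidentLabelSum_cons, Sym2.mem_iff,
      decide_eq_true_eq]
    cases w with
    | nil =>
      simp only [Walk.edges_nil, List.map_nil, List.getLast?_singleton, Option.mem_def,
        Option.some.injEq, forall_eq'] at hlast
      refine ⟨0, ?_⟩
      by_cases h1 : v = u
      · subst h1; simp [hne]
      · by_cases h2 : v = u'
        · subst h2; simp [hne.symm]; omega
        · simp [h1, h2]
    | @cons _ u'' _ hadj' w' =>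
      simp only [Walk.edges_cons, List.map_cons, List.getLast?_cons_cons,
        List.isChain_cons_cons] at hchain hlast
      obtain ⟨c, hc, hlo, hhi⟩ := ih (x₀ := f s(u', u'')) (by simpa using hchain.2) (by simp)
        (by simpa using hlast)
      by_cases h1 : v = u
      · subst h1
        refine ⟨c, ?_⟩
        simp_all
        omega
      · by_cases h2 : v = u'
        · subst h2
          refine ⟨c + 1, ?_⟩
          simp_all [Nat.mul_succ]
          omega
        · refine ⟨c, ?_⟩
          simp_all

theorem Walk.incidentLabelSum_bounds_of_ne {a b : V} (w : G.Walk a b) (hab : a ≠ b)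
    (f : Sym2 V → ℕ) {P Q A B : ℕ}
    (hchain : (w.edges.map f).IsChain fun x y => P ≤ x + y ∧ x + y ≤ Q)
    (hhead : ∀ y ∈ (w.edges.map f).head?, A ≤ y ∧ y ≤ B)
    (hlast : ∀ y ∈ (w.edges.map f).getLast?, A ≤ y ∧ y ≤ B) (v : V) :
    ∃ c, w.edges.countP (v ∈ ·) = 2 * c + [a, b].count v ∧
      P * c + A * [a, b].count v ≤ incidentLabelSum f v w.edges ∧
      incidentLabelSum f v w.edges ≤ Q * c + B * [a, b].count v := by
  obtain ⟨x, hx⟩ : ∃ x, (w.edges.map f).head? = some x := by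
    cases w with
    | nil => exact absurd rfl hab
    | cons => simp
  have hxAB := hhead x hx
  obtain ⟨c, hc, hlo, hhi⟩ := w.incidentLabelSum_bounds f hchain hx hlast v
  refine ⟨c, ?_⟩
  by_cases hva : v = a
  · subst hva; simp_all; omega
  · by_cases hvb : v = b
    · subst hvb; simp_all
    · have h0 : [a, b].count v = 0 := List.count_eq_zero_of_not_mem (by simp [hva, hvb])
      simp_all

theorem IsTrailDecomposition.vertexSum_bounds [Fintype V] [DecidableRel G.Adj]
    {D : List G.BundledWalk} (hD : IsTrailDecomposition D) {h : ℕ}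
    (hdeg : ∀ v, G.degree v = 2 * h + 1) {f : Sym2 V → ℕ} {P Q A B : ℕ}
    (hchain : ∀ t ∈ D, (t.walk.edges.map f).IsChain fun x y => P ≤ x + y ∧ x + y ≤ Q)
    (hhead : ∀ t ∈ D, ∀ y ∈ (t.walk.edges.map f).head?, A ≤ y ∧ y ≤ B)
    (hlast : ∀ t ∈ D, ∀ y ∈ (t.walk.edges.map f).getLast?, A ≤ y ∧ y ≤ B) (v : V) :
    P * h + A ≤ vertexSum G f v ∧ vertexSum G f v ≤ Q * h + B := by
  obtain ⟨C, hC, hlo, hhi⟩ := List.exists_sum_bounds (l := D)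
    (a := fun t => t.walk.edges.countP (v ∈ ·)) (e := fun t => [t.start, t.finish].count v)
    (s := fun t => incidentLabelSum f v t.walk.edges) fun t ht =>
    t.walk.incidentLabelSum_bounds_of_ne (hD.start_ne_finish ht) f (hchain t ht) (hhead t ht)
      (hlast t ht) v
  have hdegsum : (D.map fun t => t.walk.edges.countP (v ∈ ·)).sum = 2 * h + 1 := by
    rw [← hdeg v, ← hD.countP_edges v, List.countP_flatMap]; rfl
  have hendsum : (D.map fun t => [t.start, t.finish].count v).sum = 1 := by
    rw [← hD.count_ends v, List.count_flatMap]; rfl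
  rw [hdegsum, hendsum] at hC
  obtain rfl : C = h := by omega
  rw [hendsum, mul_one] at hlo hhi
  rw [vertexSum_eq_incidentLabelSum hD.nodup_edges (fun _ => hD.mem_edges_iff),
    incidentLabelSum_flatMap]
  exact ⟨hlo, hhi⟩

theorem IsTrailDecomposition.exists_approx_magic [Fintype V] [DecidableRel G.Adj] {h : ℕ}
    {t₀ : G.BundledWalk} {D : List G.BundledWalk} (hD : IsTrailDecomposition (t₀ :: D))
    (hdeg : ∀ v, G.degree v = 2 * h + 1) (hlong : 2 * h + 1 ≤ t₀.walk.length) :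
    ∃ f : Sym2 V → ℕ, Set.BijOn f G.edgeSet (Set.Icc 1 G.edgeFinset.card) ∧
      ∀ u v, vertexSum G f u ≤ vertexSum G f v + (G.edgeFinset.card - 1) := by
  set m := G.edgeFinset.card
  obtain ⟨f, hf⟩ := List.exists_map_eq_of_nodup hD.nodup_edges
    (l' := (List.range m).map (snake m))
    (by rw [List.length_map, List.length_range, hD.length_edges])
  have hsplit : (List.range m).map (snake m) =
      t₀.walk.edges.map f ++ (D.flatMap (·.walk.edges)).map f := by
    rw [← hf, List.flatMap_cons, List.map_append]
  obtain ⟨hhead₀, hlast₀, hrest⟩ := snake_bounds_of_append_eq hsplit (by simpa using hlong)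
  have hrest' : ∀ t ∈ D, ∀ y ∈ t.walk.edges.map f, h + 1 ≤ y ∧ y ≤ m := by
    intro t ht y hy
    obtain ⟨e, he, rfl⟩ := List.mem_map.1 hy
    exact hrest _ (List.mem_map_of_mem (List.mem_flatMap.2 ⟨t, ht, he⟩))
  have hbounds := hD.vertexSum_bounds hdeg (f := f) (P := m) (Q := m + 1)
    (fun t ht => (hf ▸ isChain_map_snake_range).infix <| List.IsInfix.map f <| by
      rw [List.flatMap_def]; exact List.infix_of_mem_flatten (List.mem_map_of_mem ht))
    (fun t ht => by
      rcases List.mem_cons.1 ht with rfl | ht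
      exacts [hhead₀, fun y hy => hrest' t ht y (List.mem_of_mem_head? hy)])
    (fun t ht => by
      rcases List.mem_cons.1 ht with rfl | ht
      exacts [hlast₀, fun y hy => hrest' t ht y (List.mem_of_mem_getLast? hy)])
  refine ⟨f, ?_, fun u v => ?_⟩
  · convert List.bijOn_of_map_eq hf nodup_map_snake_range using 1 <;> ext
    · exact hD.mem_edges_iff.symm
    · exact mem_map_snake_range.symm
  · have := hbounds u
    have := hbounds v
    rw [Nat.succ_mul] at *
    omega

end SimpleGraph

theorem connected_odd_regular_approx_magic_general {V : Type} [Finite V] {n k : ℕ}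
    (G : SimpleGraph V) (hn : Nat.card V = n)
    (hreg : ∀ v : V, Nat.card (G.neighborSet v) = k)
    (hodd : Odd k) :
    ∃ f : Sym2 V → ℕ,
      Set.BijOn f G.edgeSet (Set.Icc 1 (n * k / 2)) ∧
      ∀ u v : V, vertexSum G f u ≤ vertexSum G f v + (n * k / 2 - 1) := by
  classical
  have := Fintype.ofFinite V
  obtain ⟨h, rfl⟩ := hodd
  have hdeg (v : V) : G.degree v = 2 * h + 1 := by
    rw [← G.card_neighborSet_eq_degree, ← Nat.card_eq_fintype_card, hreg]
  have hsum := G.sum_degrees_eq_twice_card_edges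
  simp only [hdeg, Finset.sum_const, Finset.card_univ, smul_eq_mul, ← Nat.card_eq_fintype_card,
    hn] at hsum
  rw [show n * (2 * h + 1) / 2 = G.edgeFinset.card by omega]
  rcases isEmpty_or_nonempty V with hV | hV
  · refine ⟨fun _ => 0, ?_, isEmptyElim⟩
    simp only [← hn, Nat.card_of_isEmpty, zero_mul] at hsum
    rw [show G.edgeFinset.card = 0 by omega]
    simp [Set.eq_empty_of_isEmpty]
  have hcard : Even (Fintype.card V) := by
    have : n * (2 * h + 1) = 2 * (n * h) + n := by ring
    exact ⟨G.edgeFinset.card - n * h, by rw [← Nat.card_eq_fintype_card, hn]; omega⟩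
  obtain ⟨D, hD⟩ :=
    SimpleGraph.exists_isTrailDecomposition (fun v => hdeg v ▸ odd_two_mul_add_one h) hcard
  obtain ⟨t₀, ht₀, hlong⟩ := hD.exists_le_length hdeg
  exact (hD.perm (List.perm_cons_erase ht₀)).exists_approx_magic hdeg hlong

/-- A connected `k`-regular graph on `n` vertices with `k ≥ 1` odd is
`(nk/2 − 1)`-approximately magic. -/
theorem connected_odd_regular_approx_magic {V : Type} [Finite V] {n k : ℕ}
    (G : SimpleGraph V) (hn : Nat.card V = n)
    (hreg : ∀ v : V, Nat.card (G.neighborSet v) = k)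
    (hk1 : 1 ≤ k) (hodd : Odd k) (hconn : G.Connected) :
    ∃ f : Sym2 V → ℕ,
      Set.BijOn f G.edgeSet (Set.Icc 1 (n * k / 2)) ∧
      ∀ u v : V, vertexSum G f u ≤ vertexSum G f v + (n * k / 2 - 1) :=
  connected_odd_regular_approx_magic_general G hn hreg hodd
end

section
/- Let G be a connected k-regular finite simple graph on n vertices, where k ≥ 2 is even. Then G is k-approximately magic; that is, there exists a bijection f from the edge set of G to {1, 2, ..., nk/2} such that the difference between the largest vertex sum and the smallest vertex sum is at most k. -/
open Finset Function

lemma val_finRotate {m : ℕ} (i : Fin m) : (finRotate m i : ℕ) = (i + 1) % m := by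
  simp [Fin.val_add]

-- For odd `m` the labels read `1, m - 1, 3, m - 3, …, m`; for even `m` the two parities
-- exchange roles from position `m / 2` on. Either way cyclically adjacent labels sum to `m`,
-- `m + 1` or `m + 2`.
def cycleLabel (m i : ℕ) : ℕ :=
  if i % 2 = 0 then (if 2 * i < m ∨ m % 2 = 1 then i + 1 else m - i)
  else (if 2 * i < m ∨ m % 2 = 1 then m - i else i + 1)

lemma cycleLabel_mem_Icc {m i : ℕ} (h : i < m) : cycleLabel m i ∈ Set.Icc 1 m := by
  unfold cycleLabel; split_ifs <;> simp only [Set.mem_Icc] <;> omega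

lemma cycleLabel_injOn (m : ℕ) : Set.InjOn (cycleLabel m) (Set.Iio m) := by
  intro i hi j hj h
  simp only [Set.mem_Iio] at hi hj
  unfold cycleLabel at h; split_ifs at h <;> omega

lemma cycleLabel_add_finRotate {m : ℕ} (i : Fin m) :
    m ≤ cycleLabel m i + cycleLabel m (finRotate m i) ∧
      cycleLabel m i + cycleLabel m (finRotate m i) ≤ m + 2 := by
  rw [val_finRotate]
  obtain hlt | hge := Nat.lt_or_ge (i + 1) m
  · rw [Nat.mod_eq_of_lt hlt]; unfold cycleLabel; split_ifs <;> omega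
  · rw [show (i : ℕ) + 1 = m by omega, Nat.mod_self]; unfold cycleLabel; split_ifs <;> omega

lemma bijOn_cycleLabel (m : ℕ) :
    Set.BijOn (fun i : Fin m => cycleLabel m i) Set.univ (Set.Icc 1 m) := by
  have hinj : Function.Injective (fun i : Fin m => cycleLabel m i) := fun i j h =>
    Fin.ext (cycleLabel_injOn m i.isLt j.isLt h)
  refine ⟨fun i _ => cycleLabel_mem_Icc i.isLt, hinj.injOn, fun j hj => ?_⟩
  have himage : univ.image (fun i : Fin m => cycleLabel m i) = Icc 1 m :=
    eq_of_subset_of_card_le (fun j hj => by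
      obtain ⟨i, -, rfl⟩ := mem_image.mp hj
      simpa using cycleLabel_mem_Icc i.isLt)
      (by simp [card_image_of_injective _ hinj])
  obtain ⟨i, -, hi⟩ := mem_image.mp (himage ▸ (by simpa using hj : j ∈ Icc 1 m))
  exact ⟨i, trivial, hi⟩

lemma sum_filter_mem_eq_sum_filter_arrival {V ι M : Type*} [Fintype ι] [DecidableEq ι]
    [DecidableEq V] [AddCommMonoid M] (σ : Equiv.Perm ι) {γ : ι → V}
    (hγ : ∀ i, γ i ≠ γ (σ i)) (g : ι → M) (v : V) :
    ∑ i with v ∈ s(γ i, γ (σ i)), g i = ∑ i with γ (σ i) = v, (g i + g (σ i)) := by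
  have hsplit : ({i | v ∈ s(γ i, γ (σ i))} : Finset ι) =
      ({i | γ (σ i) = v} : Finset ι) ∪ ({i | γ i = v} : Finset ι) := by
    ext i; simp [eq_comm, or_comm]
  have hdisj : Disjoint ({i | γ (σ i) = v} : Finset ι) ({i | γ i = v} : Finset ι) :=
    disjoint_filter.mpr fun i _ h h' => hγ i (h'.trans h.symm)
  have hshift : ∑ i with γ i = v, g i = ∑ i with γ (σ i) = v, g (σ i) :=
    (sum_equiv σ (by simp) fun _ _ => rfl).symm
  rw [hsplit, sum_union hdisj, hshift, ← sum_add_distrib]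

section EdgeTour

variable {V ι : Type*} [Finite V] [Fintype ι] {G : SimpleGraph V}

lemma vertexSum_eq_sum_filter_mem [DecidableEq V] {E : ι → Sym2 V} (hinj : Injective E)
    (hrange : Set.range E = G.edgeSet) (f : Sym2 V → ℕ) (v : V) :
    vertexSum G f v = ∑ i with v ∈ E i, f (E i) := by
  refine (sum_nbij E (fun i hi => ?_) hinj.injOn (fun e he => ?_) fun _ _ => rfl).symm
  · rw [Set.Finite.mem_toFinset]
    exact ⟨hrange ▸ Set.mem_range_self i, (mem_filter.mp hi).2⟩
  · rw [Set.Finite.coe_toFinset] at he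
    obtain ⟨⟨i, rfl⟩, hv⟩ : e ∈ Set.range E ∧ v ∈ e := hrange ▸ he
    exact ⟨i, by simpa using hv, rfl⟩

-- A closed tour is encoded by its steps `ι`, the successor permutation `σ` and the start vertices
-- `γ`: step `i` runs along `s(γ i, γ (σ i))`, and the hypotheses `hinj`, `hrange` below say that
-- it uses every edge exactly once.
variable [DecidableEq V] [DecidableEq ι] {σ : Equiv.Perm ι} {γ : ι → V}

lemma vertexSum_eq_sum_filter_arrival (hinj : Injective fun i => s(γ i, γ (σ i)))
    (hrange : Set.range (fun i => s(γ i, γ (σ i))) = G.edgeSet) (f : Sym2 V → ℕ) (v : V) :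
    vertexSum G f v =
      ∑ i with γ (σ i) = v, (f s(γ i, γ (σ i)) + f s(γ (σ i), γ (σ (σ i)))) := by
  have hγ : ∀ i, γ i ≠ γ (σ i) := fun i =>
    G.mem_edgeSet.mp (hrange ▸ Set.mem_range_self (f := fun i => s(γ i, γ (σ i))) i) |>.ne
  rw [vertexSum_eq_sum_filter_mem hinj hrange,
    sum_filter_mem_eq_sum_filter_arrival σ hγ (fun i => f s(γ i, γ (σ i)))]

lemma two_mul_card_filter_arrival (hinj : Injective fun i => s(γ i, γ (σ i)))
    (hrange : Set.range (fun i => s(γ i, γ (σ i))) = G.edgeSet) (v : V) :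
    2 * #{i | γ (σ i) = v} = Nat.card (G.neighborSet v) := by
  have hcount := vertexSum_eq_sum_filter_arrival hinj hrange (fun _ => 1) v
  rw [vertexSum, sum_const, smul_eq_mul, mul_one, ← Nat.card_eq_card_finite_toFinset,
    Nat.card_congr (G.incidenceSetEquivNeighborSet v), sum_const, smul_eq_mul] at hcount
  omega

lemma vertexSum_extend_mem_Icc (hinj : Injective fun i => s(γ i, γ (σ i)))
    (hrange : Set.range (fun i => s(γ i, γ (σ i))) = G.edgeSet) {ℓ : ι → ℕ} {a : ℕ}
    (hℓ : ∀ i, a ≤ ℓ i + ℓ (σ i) ∧ ℓ i + ℓ (σ i) ≤ a + 2) (v : V) :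
    vertexSum G (extend (fun i => s(γ i, γ (σ i))) ℓ 0) v ∈
      Set.Icc (#{i | γ (σ i) = v} * a) (#{i | γ (σ i) = v} * (a + 2)) := by
  rw [vertexSum_eq_sum_filter_arrival hinj hrange]
  simp only [hinj.extend_apply]
  constructor
  · simpa using card_nsmul_le_sum _ _ a fun i _ => (hℓ i).1
  · simpa using sum_le_card_nsmul _ _ (a + 2) fun i _ => (hℓ i).2

theorem exists_bijOn_vertexSum_le_add (hinj : Injective fun i => s(γ i, γ (σ i)))
    (hrange : Set.range (fun i => s(γ i, γ (σ i))) = G.edgeSet) {ℓ : ι → ℕ} {N a k : ℕ}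
    (hbij : Set.BijOn ℓ Set.univ (Set.Icc 1 N))
    (hℓ : ∀ i, a ≤ ℓ i + ℓ (σ i) ∧ ℓ i + ℓ (σ i) ≤ a + 2)
    (hreg : ∀ v, Nat.card (G.neighborSet v) = k) :
    ∃ f : Sym2 V → ℕ, Set.BijOn f G.edgeSet (Set.Icc 1 N) ∧
      ∀ u v, vertexSum G f u ≤ vertexSum G f v + k := by
  refine ⟨extend (fun i => s(γ i, γ (σ i))) ℓ 0, ?_, fun u v => ?_⟩
  · rw [← hrange, ← Set.image_univ, ← Set.bijOn_comp_iff hinj.injOn]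
    simpa only [comp_def, hinj.extend_apply] using hbij
  · have hu := vertexSum_extend_mem_Icc hinj hrange hℓ u
    have hv := vertexSum_extend_mem_Icc hinj hrange hℓ v
    have hcu := two_mul_card_filter_arrival hinj hrange u
    have hcv := two_mul_card_filter_arrival hinj hrange v
    rw [hreg] at hcu hcv
    have hc : #{i | γ (σ i) = u} = #{i | γ (σ i) = v} := by omega
    rw [hc, mul_add] at hu
    simp only [Set.mem_Icc] at hu hv
    omega

end EdgeTour

namespace SimpleGraph

variable {V : Type*} {G : SimpleGraph V}

namespace Walk

lemma IsTrail.concat {u v w : V} {W : G.Walk u v} (hW : W.IsTrail) (h : G.Adj v w)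
    (hfresh : s(v, w) ∉ W.edges) : (W.concat h).IsTrail := by
  rw [isTrail_def, edges_concat, List.concat_eq_append]
  exact hW.edges_nodup.append (List.nodup_singleton _) (by simpa using hfresh)

lemma exists_adj_not_mem_edges_of_mem_support {u v : V} (p : G.Walk u v) {a b : V}
    (q : G.Walk a b) (ha : a ∈ p.support) (hq : ∃ e ∈ q.edges, e ∉ p.edges) :
    ∃ x ∈ p.support, ∃ y, G.Adj x y ∧ s(x, y) ∉ p.edges := by
  induction q with
  | nil => simp at hq
  | @cons a c b hadj q ih =>
    by_cases hac : s(a, c) ∈ p.edges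
    · refine ih (p.snd_mem_support_of_mem_edges hac) ?_
      obtain ⟨e, he, hep⟩ := hq
      rw [edges_cons, List.mem_cons] at he
      rcases he with rfl | he
      · exact absurd hac hep
      · exact ⟨e, he, hep⟩
    · exact ⟨a, ha, c, hadj, hac⟩

lemma getVert_finRotate {u : V} (p : G.Walk u u) (i : Fin p.length) :
    p.getVert (finRotate _ i) = p.getVert (i + 1) := by
  rw [val_finRotate]
  obtain hlt | hge := Nat.lt_or_ge (i + 1) p.length
  · rw [Nat.mod_eq_of_lt hlt]
  · rw [show (i : ℕ) + 1 = p.length by omega, Nat.mod_self, getVert_zero, getVert_length]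

lemma mk_getVert_finRotate {u : V} (p : G.Walk u u) (i : Fin p.length) :
    s(p.getVert i, p.getVert (finRotate _ i)) = p.edges[(i : ℕ)]'(by simp) := by
  rw [getVert_finRotate, getElem_edges]

lemma IsTrail.injective_mk_getVert_finRotate {u : V} {p : G.Walk u u} (hp : p.IsTrail) :
    Injective fun i : Fin p.length => s(p.getVert i, p.getVert (finRotate _ i)) := by
  intro i j h
  simp only [mk_getVert_finRotate] at h
  exact Fin.ext (hp.edges_nodup.getElem_inj_iff.mp h)

variable [DecidableEq V]

lemma IsEulerian.range_mk_getVert_finRotate {u : V} {p : G.Walk u u} (hp : p.IsEulerian) :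
    Set.range (fun i : Fin p.length => s(p.getVert i, p.getVert (finRotate _ i))) =
      G.edgeSet := by
  ext e
  simp only [Set.mem_range, mk_getVert_finRotate]
  constructor
  · rintro ⟨i, rfl⟩
    exact p.edges_subset_edgeSet (List.getElem_mem _)
  · intro he
    obtain ⟨i, hi, rfl⟩ := List.mem_iff_getElem.mp (hp.mem_edges_iff.mpr he)
    exact ⟨⟨i, by simpa using hi⟩, rfl⟩

lemma IsEulerian.card_edgeFinset [Fintype G.edgeSet] {u : V} {p : G.Walk u u} (hp : p.IsEulerian) :
    #G.edgeFinset = p.length := by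
  rw [← hp.edgesFinset_eq, ← length_edges]
  rfl

variable [Fintype V] [DecidableRel G.Adj]

lemma IsTrail.exists_adj_not_mem_edges_s1 {u x : V} {W : G.Walk u x} (hW : W.IsTrail)
    (hx : x ≠ u) (hdeg : Even (G.degree x)) : ∃ y, G.Adj x y ∧ s(x, y) ∉ W.edges := by
  by_contra! hall
  have hcount : W.edges.countP (x ∈ ·) = G.degree x := by
    rw [← card_incidenceFinset_eq_degree, List.countP_eq_length_filter,
      ← List.toFinset_card_of_nodup (hW.edges_nodup.filter _)]
    congr 1
    ext e
    simp only [List.mem_toFinset, List.mem_filter, decide_eq_true_eq, mem_incidenceFinset]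
    refine ⟨fun he => ⟨W.edges_subset_edgeSet he.1, he.2⟩, fun he => ⟨?_, he.2⟩⟩
    obtain ⟨y, rfl⟩ := Sym2.mem_iff_exists.mp he.2
    exact hall y he.1
  have := (hW.even_countP_edges_iff x).mp (hcount ▸ hdeg) hx.symm
  exact this.2 rfl

lemma IsTrail.exists_isTrail_length_le (hdeg : ∀ v, Even (G.degree v)) {u x : V}
    (W : G.Walk u x) (hW : W.IsTrail) :
    ∃ C : G.Walk u u, C.IsTrail ∧ W.length ≤ C.length := by
  by_cases hx : x = u
  · subst hx
    exact ⟨W, hW, le_rfl⟩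
  obtain ⟨y, hadj, hfresh⟩ := hW.exists_adj_not_mem_edges_s1 hx (hdeg x)
  have hW' := hW.concat hadj hfresh
  obtain ⟨C, hC, hlen⟩ := exists_isTrail_length_le hdeg (W.concat hadj) hW'
  exact ⟨C, hC, by simp only [length_concat] at hlen; omega⟩
termination_by #G.edgeFinset - W.length
decreasing_by
  have := hW'.length_le_card_edgeFinset
  simp only [length_concat] at this ⊢
  omega

end Walk

open Walk

lemma Connected.exists_adj_not_mem_edges_s1 {u v : V} (hconn : G.Connected) (p : G.Walk u v)
    {e : Sym2 V} (he : e ∈ G.edgeSet) (hep : e ∉ p.edges) :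
    ∃ x ∈ p.support, ∃ y, G.Adj x y ∧ s(x, y) ∉ p.edges := by
  induction e using Sym2.ind with
  | _ a b =>
    obtain ⟨q⟩ := hconn u a
    have hab : G.Adj a b := he
    exact p.exists_adj_not_mem_edges_of_mem_support (q.concat hab) p.start_mem_support
      ⟨s(a, b), by simp, hep⟩

variable [DecidableEq V] [Fintype V] [DecidableRel G.Adj]

lemma Connected.exists_isTrail_length_gt (hconn : G.Connected) (hdeg : ∀ v, Even (G.degree v))
    {w : V} {p : G.Walk w w} (hp : p.IsTrail) (hnot : ¬ p.IsEulerian) :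
    ∃ (x : V) (C : G.Walk x x), C.IsTrail ∧ p.length < C.length := by
  obtain ⟨e, he, hep⟩ : ∃ e ∈ G.edgeSet, e ∉ p.edges := by
    by_contra! h
    exact hnot (hp.isEulerian_of_forall_mem h)
  obtain ⟨x, hx, y, hadj, hfresh⟩ := hconn.exists_adj_not_mem_edges_s1 p he hep
  have hfresh' : s(x, y) ∉ (p.rotate x hx).edges := fun h =>
    hfresh ((p.rotate_edges x hx).perm.mem_iff.mp h)
  obtain ⟨C, hC, hlen⟩ := ((hp.rotate hx).concat hadj hfresh').exists_isTrail_length_le hdeg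
  exact ⟨x, C, hC, by simp only [length_concat, length_rotate] at hlen; omega⟩

lemma Connected.exists_isEulerian_of_isTrail (hconn : G.Connected)
    (hdeg : ∀ v, Even (G.degree v)) {w : V} (p : G.Walk w w) (hp : p.IsTrail) :
    ∃ (x : V) (C : G.Walk x x), C.IsEulerian := by
  by_cases h : p.IsEulerian
  · exact ⟨w, p, h⟩
  obtain ⟨x, C, hC, hlt⟩ := hconn.exists_isTrail_length_gt hdeg hp h
  exact hconn.exists_isEulerian_of_isTrail hdeg C hC
termination_by #G.edgeFinset - p.length
decreasing_by
  have := hC.length_le_card_edgeFinset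
  omega

theorem Connected.exists_isEulerian_s1 (hconn : G.Connected) (hdeg : ∀ v, Even (G.degree v)) :
    ∃ (x : V) (C : G.Walk x x), C.IsEulerian :=
  let ⟨v⟩ := hconn.nonempty
  hconn.exists_isEulerian_of_isTrail hdeg (nil : G.Walk v v) .nil

end SimpleGraph

open SimpleGraph

theorem connected_even_regular_approx_magic_general {V : Type} [Finite V] {n k : ℕ}
    (G : SimpleGraph V) (hn : Nat.card V = n)
    (hreg : ∀ v : V, Nat.card (G.neighborSet v) = k)
    (heven : Even k) (hconn : G.Connected) :
    ∃ f : Sym2 V → ℕ,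
      Set.BijOn f G.edgeSet (Set.Icc 1 (n * k / 2)) ∧
      ∀ u v : V, vertexSum G f u ≤ vertexSum G f v + k := by
  classical
  have := Fintype.ofFinite V
  have hdeg : ∀ v, G.degree v = k := fun v => by
    rw [← card_neighborSet_eq_degree, ← Nat.card_eq_fintype_card, hreg]
  obtain ⟨w, p, hp⟩ := hconn.exists_isEulerian_s1 fun v => hdeg v ▸ heven
  have hnk : n * k = 2 * p.length := by
    rw [← hp.card_edgeFinset, ← G.sum_degrees_eq_twice_card_edges]
    simp [hdeg, ← hn]
  rw [show n * k / 2 = p.length by omega]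
  exact exists_bijOn_vertexSum_le_add hp.isTrail.injective_mk_getVert_finRotate
    hp.range_mk_getVert_finRotate (bijOn_cycleLabel _) cycleLabel_add_finRotate hreg

/-- A connected `k`-regular graph on `n` vertices with `k ≥ 2` even is
`k`-approximately magic. -/
theorem connected_even_regular_approx_magic {V : Type} [Finite V] {n k : ℕ}
    (G : SimpleGraph V) (hn : Nat.card V = n)
    (hreg : ∀ v : V, Nat.card (G.neighborSet v) = k)
    (hk2 : 2 ≤ k) (heven : Even k) (hconn : G.Connected) :
    ∃ f : Sym2 V → ℕ,
      Set.BijOn f G.edgeSet (Set.Icc 1 (n * k / 2)) ∧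
      ∀ u v : V, vertexSum G f u ≤ vertexSum G f v + k :=
  connected_even_regular_approx_magic_general G hn hreg heven hconn
end

section
/- Let G1 be a k1-regular finite simple graph and G2 a k2-regular finite simple graph, with k1 ≥ 1 and k2 ≥ 1 (neither graph need be connected). Then the Cartesian product G1 × G2 is antimagic. -/
/-!
Number the edges and vertices of `G₁` by `η` and `σ`, those of `G₂` by `ψ` and `ρ`, and label the
edge `{(u, i), (v, i)}` by `sE (η uv) + ρ i` and the edge `{(u, i), (u, j)}` by `sV (σ u) + ψ ij`,
where the blocks `[sE a, sE a + |V₂|)` and `[sV t, sV t + |E₂|)` tile `[0, |E(G₁ □ G₂)|)`. The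
vertex sum at `(u, i)` is then `X u + Y i` with `Y i = k₁ ρ i + ∑_{j ~ i} ψ ij < k₁ |V₂| + k₂ |E₂|`,
and `Y` is injective once `ρ` lists `V₂` by increasing `∑_{j ~ i} ψ ij`; so the sums are distinct
as soon as `X` grows by at least `k₁ |V₂| + k₂ |E₂|` along `σ`. By symmetry `k₁ ≤ k₂`. If
`k₁ ≥ 2` then `|E₁| ≥ |V₁|`, so a `|V₂|`-block fits between any two consecutive `|E₂|`-blocks,
and `σ` lists `V₁` by increasing `∑_{v ~ u} sE (η uv)`. If `k₁ = 1`, `G₁` is a perfect matching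
and the ends of its `a`-th edge take the `|E₂|`-blocks around the `a`-th `|V₂|`-block. Labels may
start at `0`: adding `1` to all of them shifts every vertex sum by the common degree `k₁ + k₂`.
-/

open Finset SimpleGraph Function

namespace SimpleGraph

section LocallyFinite

variable {V : Type*} [Finite V] (G : SimpleGraph V) [G.LocallyFinite]

theorem vertexSum_eq_sum_neighborFinset (f : Sym2 V → ℕ) (v : V) :
    vertexSum G f v = ∑ w ∈ G.neighborFinset v, f s(v, w) := by
  refine Eq.trans (Finset.sum_congr ?_ fun _ _ => rfl) (Finset.sum_map _ (Sym2.mkEmbedding v) f)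
  ext e
  induction e with
  | h a b =>
    simp only [Set.Finite.mem_toFinset, mem_map, mem_neighborFinset, Sym2.mkEmbedding_apply,
      mk'_mem_incidenceSet_iff]
    constructor
    · rintro ⟨hab, rfl | rfl⟩
      · exact ⟨b, hab, rfl⟩
      · exact ⟨a, hab.symm, Sym2.eq_swap⟩
    · rintro ⟨w, hw, h⟩
      rcases Sym2.eq_iff.mp h with ⟨rfl, rfl⟩ | ⟨rfl, rfl⟩
      · exact ⟨hw, .inl rfl⟩
      · exact ⟨hw.symm, .inr rfl⟩

theorem vertexSum_add_one (f : Sym2 V → ℕ) (v : V) :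
    vertexSum G (fun e => f e + 1) v = vertexSum G f v + G.degree v := by
  simp [vertexSum_eq_sum_neighborFinset, Finset.sum_add_distrib]

end LocallyFinite

theorem IsRegularOfDegree.two_mul_card_edgeFinset {V : Type*} [Fintype V] [DecidableEq V]
    {G : SimpleGraph V} [DecidableRel G.Adj] {d : ℕ} (hG : G.IsRegularOfDegree d) :
    2 * #G.edgeFinset = Fintype.card V * d := by
  rw [← sum_degrees_eq_twice_card_edges, Finset.sum_congr rfl fun v _ => hG.degree_eq v,
    sum_const, card_univ, smul_eq_mul]

theorem IsRegularOfDegree.exists_bijOn_range_div_two {V : Type*} [Fintype V] [DecidableEq V]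
    {G : SimpleGraph V} [DecidableRel G.Adj] (hG : G.IsRegularOfDegree 1) {η : Sym2 V → ℕ}
    (hη : Set.BijOn η G.edgeSet (range #G.edgeFinset)) :
    ∃ σ : V → ℕ, Set.BijOn σ Set.univ (range (Fintype.card V)) ∧
      ∀ u v, G.Adj u v → σ u / 2 = η s(u, v) := by
  have hpartner : ∀ u, ∃ v, G.neighborFinset u = {v} := fun u =>
    card_eq_one.mp (by rw [card_neighborFinset_eq_degree, hG.degree_eq])
  choose m hm using hpartner
  have hadj : ∀ u v, G.Adj u v ↔ v = m u := fun u v => by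
    rw [← mem_neighborFinset, hm, mem_singleton]
  have hmm : ∀ u, m (m u) = u := fun u => ((hadj _ _).mp ((hadj _ _).mpr rfl).symm).symm
  let : LinearOrder V := LinearOrder.lift' (Fintype.equivFin V) (Fintype.equivFin V).injective
  set τ : V → ℕ := fun u => if u < m u then 0 else 1
  have hτ : ∀ u, τ (m u) ≠ τ u := fun u => by
    have hne : u ≠ m u := G.ne_of_adj ((hadj _ _).mpr rfl)
    rcases hne.lt_or_gt with h | h <;> simp [τ, hmm, h, h.not_gt]
  have hτ2 : ∀ u, τ u < 2 := fun u => by simp only [τ]; split_ifs <;> omega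
  set σ : V → ℕ := fun u => 2 * η s(u, m u) + τ u
  have hσ : Set.InjOn σ Set.univ := fun u _ u' _ h => by
    obtain ⟨hηu, hτu⟩ : η s(u, m u) = η s(u', m u') ∧ τ u = τ u' := by
      have := hτ2 u
      have := hτ2 u'
      simp only [σ] at h
      omega
    rcases Sym2.eq_iff.mp (hη.injOn ((hadj _ _).mpr rfl) ((hadj _ _).mpr rfl) hηu) with
      ⟨rfl, -⟩ | ⟨rfl, -⟩
    · rfl
    · exact absurd hτu (hτ u')
  have hmaps : Set.MapsTo σ Set.univ (range (Fintype.card V)) := fun u _ => by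
    have := hη.mapsTo (show s(u, m u) ∈ G.edgeSet from (hadj u (m u)).mpr rfl)
    have := hG.two_mul_card_edgeFinset
    have := hτ2 u
    simp only [coe_range, Set.mem_Iio, σ] at *
    omega
  refine ⟨σ, ⟨hmaps, hσ, ?_⟩, fun u v huv => ?_⟩
  · simpa using Finset.surjOn_of_injOn_of_card_le σ (s := univ) (t := range (Fintype.card V))
      (by simpa using hmaps) (by simpa using hσ) (by simp)
  · rw [(hadj u v).mp huv]
    have := hτ2 u
    simp only [σ]
    omega

theorem IsRegularOfDegree.boxProd {V₁ V₂ : Type*} {G₁ : SimpleGraph V₁} {G₂ : SimpleGraph V₂}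
    [G₁.LocallyFinite] [G₂.LocallyFinite] {k₁ k₂ : ℕ} (h₁ : G₁.IsRegularOfDegree k₁)
    (h₂ : G₂.IsRegularOfDegree k₂) : (G₁ □ G₂).IsRegularOfDegree (k₁ + k₂) := fun x => by
  rw [degree_boxProd, h₁.degree_eq, h₂.degree_eq]

end SimpleGraph

theorem isAntimagic_of_bijOn_range {V : Type*} [Finite V] {G : SimpleGraph V} [G.LocallyFinite]
    {d m : ℕ} (hG : G.IsRegularOfDegree d) {f : Sym2 V → ℕ}
    (hf : Set.BijOn f G.edgeSet (range m)) (hinj : Injective (vertexSum G f)) :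
    IsAntimagic G := by
  have hm : Nat.card G.edgeSet = m := by
    rw [Nat.card_congr hf.equiv, Nat.card_coe_set_eq, Set.ncard_coe_finset, card_range]
  have hshift : Set.BijOn (· + 1) (range m : Set ℕ) (Set.Icc 1 m) := by
    refine ⟨fun k hk => ?_, (add_left_injective 1).injOn, fun k hk => ⟨k - 1, ?_, ?_⟩⟩ <;>
      simp only [coe_range, Set.mem_Iio, Set.mem_Icc] at hk ⊢ <;> omega
  refine ⟨fun e => f e + 1, hm ▸ hshift.comp hf, fun u v huv h => huv (hinj ?_)⟩
  rw [G.vertexSum_add_one, G.vertexSum_add_one, hG.degree_eq, hG.degree_eq] at h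
  exact Nat.add_right_cancel h

theorem IsAntimagic.of_iso {V W : Type*} [Finite V] [Finite W] {G : SimpleGraph V}
    {H : SimpleGraph W} (hG : IsAntimagic G) (φ : G ≃g H) : IsAntimagic H := by
  classical
  have := Fintype.ofFinite V
  have := Fintype.ofFinite W
  obtain ⟨f, hbij, hdist⟩ := hG
  have hedge : Set.BijOn (Sym2.map φ.symm) H.edgeSet G.edgeSet :=
    ⟨fun e he => φ.symm.map_mem_edgeSet_iff.mpr he, (Sym2.map.injective φ.symm.injective).injOn,
      fun e he => ⟨e.map φ, φ.map_mem_edgeSet_iff.mpr he, by simp [Sym2.map_map]⟩⟩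
  have hsum : ∀ w, vertexSum H (f ∘ Sym2.map φ.symm) w = vertexSum G f (φ.symm w) := by
    intro w
    rw [vertexSum_eq_sum_neighborFinset, vertexSum_eq_sum_neighborFinset]
    refine Finset.sum_nbij' φ.symm φ (fun x hx => ?_) (fun y hy => ?_) (by simp) (by simp) (by simp)
    · simpa using φ.symm.map_adj_iff.mpr ((H.mem_neighborFinset _ _).mp hx)
    · simpa using φ.map_adj_iff.mpr ((G.mem_neighborFinset _ _).mp hy)
  refine ⟨f ∘ Sym2.map φ.symm, Nat.card_congr φ.mapEdgeSet ▸ hbij.comp hedge, fun u v huv => ?_⟩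
  rw [hsum, hsum]
  exact hdist _ _ (φ.symm.injective.ne huv)

theorem Finset.exists_bijOn_range {α : Type*} (s : Finset α) :
    ∃ f : α → ℕ, Set.BijOn f s (range #s) :=
  s.finite_toSet.exists_bijOn_of_encard_eq
    (by rw [Set.encard_coe_eq_coe_finsetCard, Set.encard_coe_eq_coe_finsetCard, card_range])

theorem exists_bijOn_range_monotone {α : Type*} [Fintype α] (g : α → ℕ) :
    ∃ σ : α → ℕ, Set.BijOn σ Set.univ (range (Fintype.card α)) ∧
      ∀ a b, σ a < σ b → g a ≤ g b := by
  set e := Fintype.equivFin α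
  set π := Tuple.sort (g ∘ e.symm)
  set τ := e.trans π.symm
  refine ⟨fun a => τ a, ⟨fun a _ => by simp, ?_, fun k hk => ?_⟩, fun a b hab => ?_⟩
  · exact (Fin.val_injective.comp τ.injective).injOn
  · exact ⟨τ.symm ⟨k, by simpa using hk⟩, trivial, by simp⟩
  · simpa [τ, π] using Tuple.monotone_sort (g ∘ e.symm) (le_of_lt (show τ a < τ b from hab))

theorem injective_add_of_separated {α β : Type*} {X : α → ℕ} {Y : β → ℕ} {c : ℕ}
    {σ : α → ℕ} (hσ : Injective σ) (hX : ∀ a a', σ a < σ a' → X a + c ≤ X a')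
    (hY : Injective Y) (hYc : ∀ b, Y b < c) : Injective fun x : α × β => X x.1 + Y x.2 := by
  rintro ⟨a, b⟩ ⟨a', b'⟩ h
  dsimp only at h
  obtain rfl | hne := eq_or_ne a a'
  · rw [hY (Nat.add_left_cancel h)]
  · have := hYc b
    have := hYc b'
    rcases lt_or_gt_of_ne (hσ.ne hne) with hlt | hlt
    · have := hX _ _ hlt
      omega
    · have := hX _ _ hlt
      omega

theorem Nat.mul_add_le_mul_of_lt {a b : ℕ} (c : ℕ) (h : a < b) : a * c + c ≤ b * c := by
  simpa [add_one_mul] using Nat.mul_le_mul_right c h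

def blockLabel (sE sV : ℕ → ℕ) : (ℕ × ℕ) ⊕ (ℕ × ℕ) → ℕ :=
  Sum.elim (fun x => sE x.1 + x.2) (fun x => sV x.1 + x.2)

def blockIndices (A n p B : ℕ) : Finset ((ℕ × ℕ) ⊕ (ℕ × ℕ)) :=
  (range A ×ˢ range n).disjSum (range p ×ˢ range B)

@[simp]
theorem inl_mem_blockIndices {A n p B a r : ℕ} :
    .inl (a, r) ∈ blockIndices A n p B ↔ a < A ∧ r < n := by
  simp [blockIndices]

@[simp]
theorem inr_mem_blockIndices {A n p B t s : ℕ} :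
    .inr (t, s) ∈ blockIndices A n p B ↔ t < p ∧ s < B := by
  simp [blockIndices]

theorem bijOn_blockLabel {A n p B : ℕ} {sE sV : ℕ → ℕ}
    (hEE : ∀ a a', a < a' → a' < A → sE a + n ≤ sE a')
    (hVV : ∀ t t', t < t' → t' < p → sV t + B ≤ sV t')
    (hEV : ∀ a < A, ∀ t < p, sE a + n ≤ sV t ∨ sV t + B ≤ sE a)
    (hE : ∀ a < A, sE a + n ≤ A * n + p * B) (hV : ∀ t < p, sV t + B ≤ A * n + p * B) :
    Set.BijOn (blockLabel sE sV) (blockIndices A n p B) (range (A * n + p * B)) := by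
  have hmaps : Set.MapsTo (blockLabel sE sV) (blockIndices A n p B) (range (A * n + p * B)) := by
    rintro (⟨a, r⟩ | ⟨t, s⟩) h <;> simp only [mem_coe, inl_mem_blockIndices,
      inr_mem_blockIndices, mem_range, blockLabel, Sum.elim_inl, Sum.elim_inr] at h ⊢
    · linarith [hE a h.1]
    · linarith [hV t h.1]
  have hinj : Set.InjOn (blockLabel sE sV) (blockIndices A n p B) := by
    rintro (⟨a, r⟩ | ⟨t, s⟩) hx (⟨a', r'⟩ | ⟨t', s'⟩) hy h <;> simp only [mem_coe,
      inl_mem_blockIndices, inr_mem_blockIndices, blockLabel, Sum.elim_inl, Sum.elim_inr,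
      Sum.inl.injEq, Sum.inr.injEq, Prod.mk.injEq, reduceCtorEq] at hx hy h ⊢
    · rcases lt_trichotomy a a' with hlt | rfl | hlt
      · linarith [hEE a a' hlt hy.1]
      · omega
      · linarith [hEE a' a hlt hx.1]
    · rcases hEV a hx.1 t' hy.1 with hle | hle <;> omega
    · rcases hEV a' hy.1 t hx.1 with hle | hle <;> omega
    · rcases lt_trichotomy t t' with hlt | rfl | hlt
      · linarith [hVV t t' hlt hy.1]
      · omega
      · linarith [hVV t' t hlt hx.1]
  exact ⟨hmaps, hinj, Finset.surjOn_of_injOn_of_card_le _ hmaps hinj (by simp [blockIndices])⟩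

/-- The blocks in the order `n, B, n, B, …, n, B, n, n, …, n`. -/
theorem bijOn_blockLabel_interleaved {A n p B : ℕ} (hpA : p ≤ A) :
    Set.BijOn (blockLabel (fun a => a * n + min a p * B) (fun t => (t + 1) * n + t * B))
      (blockIndices A n p B) (range (A * n + p * B)) := by
  apply bijOn_blockLabel
  · intro a a' ha _
    have := Nat.mul_add_le_mul_of_lt n ha
    have := Nat.mul_le_mul_right B (min_le_min_right p ha.le)
    omega
  · intro t t' ht _
    have := Nat.mul_add_le_mul_of_lt n ht
    have := Nat.mul_add_le_mul_of_lt B ht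
    simp only [add_one_mul]
    omega
  · intro a _ t ht
    rcases le_or_gt a t with hat | hta
    · left
      have := Nat.mul_le_mul_right n hat
      have := Nat.mul_le_mul_right B (min_le_left a p |>.trans hat)
      simp only [add_one_mul]
      omega
    · right
      have := Nat.mul_add_le_mul_of_lt n hta
      have := Nat.mul_add_le_mul_of_lt B (lt_min hta ht)
      simp only [add_one_mul]
      omega
  · intro a ha
    have := Nat.mul_add_le_mul_of_lt n ha
    have := Nat.mul_le_mul_right B (min_le_right a p)
    omega
  · intro t ht
    have := Nat.mul_add_le_mul_of_lt n (ht.trans_le hpA)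
    have := Nat.mul_add_le_mul_of_lt B ht
    simp only [add_one_mul]
    omega

theorem interleaved_weight_gap {n B k₁ k₂ t t' W W' : ℕ} (hk : k₁ ≤ k₂) (ht : t < t')
    (hW : W ≤ W') :
    W + k₂ * ((t + 1) * n + t * B) + (k₁ * n + k₂ * B) ≤ W' + k₂ * ((t' + 1) * n + t' * B) := by
  have hn := Nat.mul_add_le_mul_of_lt n ht
  have hB := Nat.mul_add_le_mul_of_lt B ht
  nlinarith [Nat.mul_le_mul_left k₂ hn, Nat.mul_le_mul_left k₂ hB, Nat.mul_le_mul_right n hk]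

/-- The blocks in the order `B, n, B, B, n, B, …, B, n, B`. -/
theorem bijOn_blockLabel_paired {A n B : ℕ} :
    Set.BijOn
      (blockLabel (fun a => a * (2 * B + n) + B) (fun t => t / 2 * (2 * B + n) + t % 2 * (B + n)))
      (blockIndices A n (2 * A) B) (range (A * n + 2 * A * B)) := by
  have hpar : ∀ t, t % 2 * (B + n) ≤ B + n := fun t => by
    rcases Nat.mod_two_eq_zero_or_one t with h | h <;> simp [h]
  have hm : A * (2 * B + n) = A * n + 2 * A * B := by ring
  apply bijOn_blockLabel
  · intro a a' ha _
    have := Nat.mul_add_le_mul_of_lt (2 * B + n) ha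
    omega
  · intro t t' ht _
    rcases (Nat.div_le_div_right (c := 2) ht.le).lt_or_eq with hlt | heq
    · have := Nat.mul_add_le_mul_of_lt (2 * B + n) hlt
      have := hpar t
      omega
    · have h0 : t % 2 = 0 := by omega
      have h1 : t' % 2 = 1 := by omega
      rw [heq, h0, h1]
      omega
  · intro a _ t _
    rcases lt_trichotomy a (t / 2) with hlt | rfl | hlt
    · have := Nat.mul_add_le_mul_of_lt (2 * B + n) hlt
      omega
    · rcases Nat.mod_two_eq_zero_or_one t with h | h <;> rw [h] <;> omega
    · have := Nat.mul_add_le_mul_of_lt (2 * B + n) hlt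
      have := hpar t
      omega
  · intro a ha
    have := Nat.mul_add_le_mul_of_lt (2 * B + n) ha
    omega
  · intro t ht
    have := Nat.mul_add_le_mul_of_lt (2 * B + n) (show t / 2 < A by omega)
    have := hpar t
    omega

theorem paired_weight_gap {n B k t t' : ℕ} (hk : 1 ≤ k) (ht : t < t') :
    t / 2 * (2 * B + n) + B + k * (t / 2 * (2 * B + n) + t % 2 * (B + n)) + (1 * n + k * B) ≤
      t' / 2 * (2 * B + n) + B + k * (t' / 2 * (2 * B + n) + t' % 2 * (B + n)) := by
  have hτ : t % 2 * (B + n) ≤ B + n := by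
    rcases Nat.mod_two_eq_zero_or_one t with h | h <;> simp [h]
  rcases (Nat.div_le_div_right (c := 2) ht.le).lt_or_eq with hlt | heq
  · have hg := Nat.mul_add_le_mul_of_lt (2 * B + n) hlt
    nlinarith [Nat.mul_le_mul_left k hg, Nat.mul_le_mul_left k hτ,
      Nat.zero_le (k * (t' % 2 * (B + n)))]
  · have h0 : t % 2 = 0 := by omega
    have h1 : t' % 2 = 1 := by omega
    rw [heq, h0, h1]
    nlinarith [Nat.mul_le_mul_right n hk]

namespace SimpleGraph

variable {V₁ V₂ : Type*} {G₁ : SimpleGraph V₁} {G₂ : SimpleGraph V₂}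

theorem mem_edgeSet_boxProd {e : Sym2 (V₁ × V₂)} :
    e ∈ (G₁ □ G₂).edgeSet ↔ (∃ e₁ ∈ G₁.edgeSet, ∃ i, e = e₁.map (·, i)) ∨
      ∃ u, ∃ e₂ ∈ G₂.edgeSet, e = e₂.map (u, ·) := by
  constructor
  · induction e with
    | h x y =>
      obtain ⟨u, i⟩ := x
      obtain ⟨v, j⟩ := y
      rintro (⟨h, rfl : i = j⟩ | ⟨h, rfl : u = v⟩)
      · exact .inl ⟨s(u, v), h, i, rfl⟩
      · exact .inr ⟨u, s(i, j), h, rfl⟩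
  · rintro (⟨e₁, he₁, i, rfl⟩ | ⟨u, e₂, he₂, rfl⟩)
    · exact (boxProdLeft G₁ G₂ i).map_mem_edgeSet_iff.mpr he₁
    · exact (boxProdRight G₁ G₂ u).map_mem_edgeSet_iff.mpr he₂

theorem vertexSum_boxProd [Finite V₁] [Finite V₂] [G₁.LocallyFinite] [G₂.LocallyFinite]
    (f : Sym2 (V₁ × V₂) → ℕ) (u : V₁) (i : V₂) :
    vertexSum (G₁ □ G₂) f (u, i) = ∑ v ∈ G₁.neighborFinset u, f s((u, i), (v, i)) +
      ∑ j ∈ G₂.neighborFinset i, f s((u, i), (u, j)) := by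
  rw [vertexSum_eq_sum_neighborFinset, neighborFinset_boxProd, sum_disjUnion, sum_product,
    sum_product]
  simp

variable [DecidableEq V₁] [DecidableEq V₂]

/-- Only the values on edges of `G₁ □ G₂` matter; `inl (0, 0)` is a junk value. -/
def boxProdIndex (η : Sym2 V₁ → ℕ) (ρ : V₂ → ℕ) (σ : V₁ → ℕ) (ψ : Sym2 V₂ → ℕ) :
    Sym2 (V₁ × V₂) → (ℕ × ℕ) ⊕ (ℕ × ℕ) :=
  Sym2.lift ⟨fun x y => if x.2 = y.2 then .inl (η s(x.1, y.1), ρ x.2)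
    else if x.1 = y.1 then .inr (σ x.1, ψ s(x.2, y.2)) else .inl (0, 0), by
      intro x y
      by_cases h₂ : x.2 = y.2
      · simp [h₂, Sym2.eq_swap]
      · by_cases h₁ : x.1 = y.1
        · simp [h₁, h₂, Ne.symm h₂, Sym2.eq_swap]
        · simp [h₁, h₂, Ne.symm h₂, Ne.symm h₁]⟩

variable {η : Sym2 V₁ → ℕ} {ρ : V₂ → ℕ} {σ : V₁ → ℕ} {ψ : Sym2 V₂ → ℕ}

theorem boxProdIndex_layer (e : Sym2 V₁) (i : V₂) :
    boxProdIndex η ρ σ ψ (e.map (·, i)) = .inl (η e, ρ i) := by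
  induction e with
  | h u v => simp [boxProdIndex]

theorem boxProdIndex_column (u : V₁) {e : Sym2 V₂} (he : e ∈ G₂.edgeSet) :
    boxProdIndex η ρ σ ψ (e.map (u, ·)) = .inr (σ u, ψ e) := by
  induction e with
  | h i j => simp [boxProdIndex, G₂.ne_of_adj he]

theorem bijOn_boxProdIndex {A n p B : ℕ} (hη : Set.BijOn η G₁.edgeSet (range A))
    (hρ : Set.BijOn ρ Set.univ (range n)) (hσ : Set.BijOn σ Set.univ (range p))
    (hψ : Set.BijOn ψ G₂.edgeSet (range B)) :
    Set.BijOn (boxProdIndex η ρ σ ψ) (G₁ □ G₂).edgeSet (blockIndices A n p B) := by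
  refine ⟨fun e he => ?_, fun e he e' he' h => ?_, ?_⟩
  · rcases mem_edgeSet_boxProd.mp he with ⟨e₁, he₁, i, rfl⟩ | ⟨u, e₂, he₂, rfl⟩
    · rw [mem_coe, boxProdIndex_layer, inl_mem_blockIndices]
      exact ⟨by simpa using hη.mapsTo he₁, by simpa using hρ.mapsTo (Set.mem_univ i)⟩
    · rw [mem_coe, boxProdIndex_column u he₂, inr_mem_blockIndices]
      exact ⟨by simpa using hσ.mapsTo (Set.mem_univ u), by simpa using hψ.mapsTo he₂⟩
  · rcases mem_edgeSet_boxProd.mp he with ⟨e₁, he₁, i, rfl⟩ | ⟨u, e₂, he₂, rfl⟩ <;>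
    rcases mem_edgeSet_boxProd.mp he' with ⟨e₁', he₁', i', rfl⟩ | ⟨u', e₂', he₂', rfl⟩
    · simp only [boxProdIndex_layer, Sum.inl.injEq, Prod.mk.injEq] at h
      rw [hη.injOn he₁ he₁' h.1, hρ.injOn (Set.mem_univ i) (Set.mem_univ i') h.2]
    · simp [boxProdIndex_layer, boxProdIndex_column _ he₂'] at h
    · simp [boxProdIndex_layer, boxProdIndex_column _ he₂] at h
    · simp only [boxProdIndex_column _ he₂, boxProdIndex_column _ he₂', Sum.inr.injEq,
        Prod.mk.injEq] at h
      rw [hσ.injOn (Set.mem_univ u) (Set.mem_univ u') h.1, hψ.injOn he₂ he₂' h.2]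
  · rintro (⟨a, r⟩ | ⟨t, s⟩) h <;> simp only [mem_coe, inl_mem_blockIndices,
      inr_mem_blockIndices] at h
    · obtain ⟨e₁, he₁, rfl⟩ := hη.surjOn (by simpa using h.1)
      obtain ⟨i, -, rfl⟩ := hρ.surjOn (by simpa using h.2)
      exact ⟨_, mem_edgeSet_boxProd.mpr (.inl ⟨e₁, he₁, i, rfl⟩), boxProdIndex_layer e₁ i⟩
    · obtain ⟨u, -, rfl⟩ := hσ.surjOn (by simpa using h.1)
      obtain ⟨e₂, he₂, rfl⟩ := hψ.surjOn (by simpa using h.2)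
      exact ⟨_, mem_edgeSet_boxProd.mpr (.inr ⟨u, e₂, he₂, rfl⟩), boxProdIndex_column u he₂⟩

theorem vertexSum_boxProd_blockLabel [Fintype V₁] [Fintype V₂] [DecidableRel G₁.Adj]
    [DecidableRel G₂.Adj] {k₁ k₂ : ℕ} (h₁ : G₁.IsRegularOfDegree k₁)
    (h₂ : G₂.IsRegularOfDegree k₂) (sE sV : ℕ → ℕ) (u : V₁) (i : V₂) :
    vertexSum (G₁ □ G₂) (blockLabel sE sV ∘ boxProdIndex η ρ σ ψ) (u, i) =
      (∑ v ∈ G₁.neighborFinset u, sE (η s(u, v)) + k₂ * sV (σ u)) +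
        (k₁ * ρ i + ∑ j ∈ G₂.neighborFinset i, ψ s(i, j)) := by
  have hlayer : ∀ v ∈ G₁.neighborFinset u,
      blockLabel sE sV (boxProdIndex η ρ σ ψ s((u, i), (v, i))) = sE (η s(u, v)) + ρ i :=
    fun v _ => congrArg (blockLabel sE sV) (boxProdIndex_layer s(u, v) i)
  have hcolumn : ∀ j ∈ G₂.neighborFinset i,
      blockLabel sE sV (boxProdIndex η ρ σ ψ s((u, i), (u, j))) = sV (σ u) + ψ s(i, j) :=
    fun j hj => congrArg (blockLabel sE sV)
      (boxProdIndex_column (e := s(i, j)) u ((G₂.mem_neighborFinset i j).mp hj))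
  rw [vertexSum_boxProd]
  simp only [comp_apply]
  rw [sum_congr rfl hlayer, sum_congr rfl hcolumn, sum_add_distrib, sum_add_distrib, sum_const,
    sum_const, card_neighborFinset_eq_degree, card_neighborFinset_eq_degree, h₁.degree_eq,
    h₂.degree_eq, smul_eq_mul, smul_eq_mul]
  ring

end SimpleGraph

section Layout

variable {V₁ V₂ : Type*} [Fintype V₁] [Fintype V₂] [DecidableEq V₁] [DecidableEq V₂]
  {G₁ : SimpleGraph V₁} {G₂ : SimpleGraph V₂} [DecidableRel G₁.Adj] [DecidableRel G₂.Adj]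
  {k₁ k₂ : ℕ}

theorem isAntimagic_boxProd_of_layout (h₁ : G₁.IsRegularOfDegree k₁)
    (h₂ : G₂.IsRegularOfDegree k₂) (hk₁ : 1 ≤ k₁) {sE sV : ℕ → ℕ} {η : Sym2 V₁ → ℕ}
    {σ : V₁ → ℕ}
    (htile : Set.BijOn (blockLabel sE sV)
      (blockIndices #G₁.edgeFinset (Fintype.card V₂) (Fintype.card V₁) #G₂.edgeFinset)
      (range (#G₁.edgeFinset * Fintype.card V₂ + Fintype.card V₁ * #G₂.edgeFinset)))
    (hη : Set.BijOn η G₁.edgeSet (range #G₁.edgeFinset))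
    (hσ : Set.BijOn σ Set.univ (range (Fintype.card V₁)))
    (hsep : ∀ u u', σ u < σ u' →
      ∑ v ∈ G₁.neighborFinset u, sE (η s(u, v)) + k₂ * sV (σ u) +
        (k₁ * Fintype.card V₂ + k₂ * #G₂.edgeFinset) ≤
      ∑ v ∈ G₁.neighborFinset u', sE (η s(u', v)) + k₂ * sV (σ u')) :
    IsAntimagic (G₁ □ G₂) := by
  obtain ⟨ψ, hψ⟩ := G₂.edgeFinset.exists_bijOn_range
  rw [coe_edgeFinset] at hψ
  set S : V₂ → ℕ := fun i => ∑ j ∈ G₂.neighborFinset i, ψ s(i, j)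
  obtain ⟨ρ, hρ, hρS⟩ := exists_bijOn_range_monotone S
  set Y : V₂ → ℕ := fun i => k₁ * ρ i + S i
  have hYlt : ∀ i i', ρ i < ρ i' → Y i < Y i' := fun i i' hlt => by
    have := hρS i i' hlt
    have := Nat.mul_lt_mul_of_pos_left hlt hk₁
    dsimp only [Y]
    omega
  have hYinj : Injective Y := fun i i' h => by
    by_contra hne
    rcases lt_or_gt_of_ne ((Set.injOn_univ.mp hρ.injOn).ne hne) with hlt | hlt
    · exact (hYlt i i' hlt).ne h
    · exact (hYlt i' i hlt).ne' h
  have hYc : ∀ i, Y i < k₁ * Fintype.card V₂ + k₂ * #G₂.edgeFinset := fun i => by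
    have hρi : ρ i < Fintype.card V₂ := by simpa using hρ.mapsTo (Set.mem_univ i)
    have hS : S i ≤ k₂ * #G₂.edgeFinset := by
      have := sum_le_card_nsmul (G₂.neighborFinset i) (fun j => ψ s(i, j)) #G₂.edgeFinset
        fun j hj => le_of_lt (by simpa using hψ.mapsTo ((G₂.mem_neighborFinset i j).mp hj))
      rwa [card_neighborFinset_eq_degree, h₂.degree_eq, smul_eq_mul] at this
    have := Nat.mul_lt_mul_of_pos_left hρi hk₁
    dsimp only [Y]
    omega
  have hXY := injective_add_of_separated (Set.injOn_univ.mp hσ.injOn) hsep hYinj hYc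
  refine isAntimagic_of_bijOn_range (h₁.boxProd h₂) (htile.comp (bijOn_boxProdIndex hη hρ hσ hψ))
    fun x y h => hXY ?_
  rwa [vertexSum_boxProd_blockLabel h₁ h₂, vertexSum_boxProd_blockLabel h₁ h₂] at h

theorem isAntimagic_boxProd_of_two_le (h₁ : G₁.IsRegularOfDegree k₁)
    (h₂ : G₂.IsRegularOfDegree k₂) (hk₁ : 2 ≤ k₁) (hk : k₁ ≤ k₂) : IsAntimagic (G₁ □ G₂) := by
  have hpA : Fintype.card V₁ ≤ #G₁.edgeFinset := by
    have := h₁.two_mul_card_edgeFinset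
    have := Nat.mul_le_mul_left (Fintype.card V₁) hk₁
    omega
  obtain ⟨η, hη⟩ := G₁.edgeFinset.exists_bijOn_range
  rw [coe_edgeFinset] at hη
  obtain ⟨σ, hσ, hσW⟩ := exists_bijOn_range_monotone fun u => ∑ v ∈ G₁.neighborFinset u,
    (η s(u, v) * Fintype.card V₂ + min (η s(u, v)) (Fintype.card V₁) * #G₂.edgeFinset)
  exact isAntimagic_boxProd_of_layout h₁ h₂ (by omega) (bijOn_blockLabel_interleaved hpA) hη hσ
    fun u u' hlt => interleaved_weight_gap hk hlt (hσW u u' hlt)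

theorem isAntimagic_boxProd_of_one (h₁ : G₁.IsRegularOfDegree 1)
    (h₂ : G₂.IsRegularOfDegree k₂) (hk₂ : 1 ≤ k₂) : IsAntimagic (G₁ □ G₂) := by
  obtain ⟨η, hη⟩ := G₁.edgeFinset.exists_bijOn_range
  rw [coe_edgeFinset] at hη
  obtain ⟨σ, hσ, hση⟩ := h₁.exists_bijOn_range_div_two hη
  set n := Fintype.card V₂
  set B := #G₂.edgeFinset
  have htile : Set.BijOn
      (blockLabel (fun a => a * (2 * B + n) + B) (fun t => t / 2 * (2 * B + n) + t % 2 * (B + n)))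
      (blockIndices #G₁.edgeFinset n (Fintype.card V₁) B)
      (range (#G₁.edgeFinset * n + Fintype.card V₁ * B)) := by
    rw [← mul_one (Fintype.card V₁), ← h₁.two_mul_card_edgeFinset]
    exact bijOn_blockLabel_paired
  have hW : ∀ u, ∑ v ∈ G₁.neighborFinset u, (η s(u, v) * (2 * B + n) + B) =
      σ u / 2 * (2 * B + n) + B := fun u => by
    rw [sum_congr rfl fun v hv => by rw [← hση u v ((G₁.mem_neighborFinset u v).mp hv)],
      sum_const, card_neighborFinset_eq_degree, h₁.degree_eq, one_smul]
  refine isAntimagic_boxProd_of_layout h₁ h₂ le_rfl htile hη hσ fun u u' hlt => ?_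
  rw [hW, hW]
  exact paired_weight_gap hk₂ hlt

theorem isAntimagic_boxProd_of_le (h₁ : G₁.IsRegularOfDegree k₁) (h₂ : G₂.IsRegularOfDegree k₂)
    (hk₁ : 1 ≤ k₁) (hk : k₁ ≤ k₂) : IsAntimagic (G₁ □ G₂) := by
  obtain rfl | hk₁ := hk₁.eq_or_lt
  · exact isAntimagic_boxProd_of_one h₁ h₂ hk
  · exact isAntimagic_boxProd_of_two_le h₁ h₂ hk₁ hk

end Layout

/-- The Cartesian product of a `k₁`-regular graph and a `k₂`-regular graph
(`k₁, k₂ ≥ 1`, not necessarily connected) is antimagic. -/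
theorem boxProd_regular_antimagic {V₁ V₂ : Type} [Finite V₁] [Finite V₂]
    {k₁ k₂ : ℕ} (G₁ : SimpleGraph V₁) (G₂ : SimpleGraph V₂)
    (hreg₁ : ∀ v : V₁, Nat.card (G₁.neighborSet v) = k₁)
    (hreg₂ : ∀ v : V₂, Nat.card (G₂.neighborSet v) = k₂)
    (hk₁ : 1 ≤ k₁) (hk₂ : 1 ≤ k₂) :
    IsAntimagic (G₁ □ G₂) := by
  classical
  have := Fintype.ofFinite V₁
  have := Fintype.ofFinite V₂
  have h₁ : G₁.IsRegularOfDegree k₁ := fun v => by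
    rw [← hreg₁ v, Nat.card_eq_fintype_card, card_neighborSet_eq_degree]
  have h₂ : G₂.IsRegularOfDegree k₂ := fun v => by
    rw [← hreg₂ v, Nat.card_eq_fintype_card, card_neighborSet_eq_degree]
  rcases le_total k₁ k₂ with hk | hk
  · exact isAntimagic_boxProd_of_le h₁ h₂ hk₁ hk
  · exact (isAntimagic_boxProd_of_le h₂ h₁ hk₂ hk).of_iso (boxProdComm G₂ G₁)
end

section
/- Let n be a positive integer divisible by 3 and let G be the finite simple graph on n vertices consisting of n/3 pairwise vertex-disjoint triangles (cycles of length 3). Then for every bijection f from the edge set of G to {1, 2, ..., n}, the difference between the largest vertex sum and the smallest vertex sum is at least 2n/3. In particular, G is not δ-approximately magic for any δ < 2n/3, so the bound ⌈2n/3⌉ for disjoint unions of odd cycles is asymptotically best possible. -/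
/-- The disjoint union of `t` triangles: vertices are pairs `(a, i)` with `a` indexing
the triangle and `i ∈ Fin 3`; two vertices are adjacent iff they lie in the same
triangle and differ. -/
def disjointTriangles (t : ℕ) : SimpleGraph (Fin t × Fin 3) where
  Adj a b := a.1 = b.1 ∧ a.2 ≠ b.2
  symm := ⟨fun _ _ ⟨h1, h2⟩ => ⟨h1.symm, h2.symm⟩⟩
  loopless := ⟨fun _ ⟨_, h⟩ => h rfl⟩

/-!
Let `u` and `v` be vertices of minimal and maximal vertex sum, and consider the triangles
through the edges labelled `1` and `n = 3t`, whose other edges carry labels `p, q` and `r, s`.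
Their vertex sums are `1 + p, 1 + q, p + q` and `n + r, n + s, r + s`. Bounding the minimum by
`1 + min p q` and `r + s` and the maximum by `p + q` and `n + max r s` forces
`3 (max - min) ≥ 2 (n - 1)`, that is `max - min ≥ 2t`. The two triangles may coincide.
-/

theorem two_mul_add_three_mul_le_of_triangle_sums {a b p q r s lo hi : ℕ}
    (hap : lo ≤ a + p) (haq : lo ≤ a + q) (hpq : p + q ≤ hi)
    (hbr : b + r ≤ hi) (hbs : b + s ≤ hi) (hrs : lo ≤ r + s) :
    2 * b + 3 * lo ≤ 2 * a + 3 * hi := by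
  omega

namespace disjointTriangles

variable {t : ℕ}

theorem incidenceSet_toFinset (a : Fin t) {i j k : Fin 3} (hij : i ≠ j) (hik : i ≠ k)
    (hjk : j ≠ k) :
    ((disjointTriangles t).incidenceSet (a, i)).toFinite.toFinset =
      {s((a, i), (a, j)), s((a, i), (a, k))} := by
  ext e
  induction e using Sym2.ind with
  | _ u v =>
    obtain ⟨b, x⟩ := u; obtain ⟨c, y⟩ := v
    simp only [Set.Finite.mem_toFinset, SimpleGraph.incidenceSet, Set.mem_sep_iff,
      SimpleGraph.mem_edgeSet, Sym2.mem_iff, disjointTriangles, Finset.mem_insert,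
      Finset.mem_singleton, Sym2.eq_iff, Prod.mk.injEq]
    have hcover : ∀ z : Fin 3, z = i ∨ z = j ∨ z = k := by omega
    grind

theorem vertexSum_eq (f : Sym2 (Fin t × Fin 3) → ℕ) (a : Fin t) {i j k : Fin 3}
    (hij : i ≠ j) (hik : i ≠ k) (hjk : j ≠ k) :
    vertexSum (disjointTriangles t) f (a, i) = f s((a, i), (a, j)) + f s((a, i), (a, k)) := by
  rw [vertexSum, incidenceSet_toFinset a hij hik hjk, Finset.sum_pair]
  simp [hik, hjk]

theorem exists_vertexSums_of_mem_edgeSet (f : Sym2 (Fin t × Fin 3) → ℕ)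
    {e : Sym2 (Fin t × Fin 3)} (he : e ∈ (disjointTriangles t).edgeSet) :
    ∃ p q : ℕ, ∃ u v w : Fin t × Fin 3,
      vertexSum (disjointTriangles t) f u = f e + p ∧
      vertexSum (disjointTriangles t) f v = f e + q ∧
      vertexSum (disjointTriangles t) f w = p + q := by
  induction e using Sym2.ind with
  | _ x y =>
    obtain ⟨a, i⟩ := x; obtain ⟨b, j⟩ := y
    obtain ⟨rfl, hij⟩ : a = b ∧ i ≠ j := he
    obtain ⟨k, hik, hjk⟩ : ∃ k, i ≠ k ∧ j ≠ k := by revert i j; decide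
    refine ⟨f s((a, i), (a, k)), f s((a, j), (a, k)), (a, i), (a, j), (a, k),
      vertexSum_eq f a hij hik hjk, ?_, ?_⟩
    · rw [vertexSum_eq f a hij.symm hjk hik, Sym2.eq_swap]
    · rw [vertexSum_eq f a hik.symm hjk.symm hij, Sym2.eq_swap, Sym2.eq_swap (a := (a, k))]

end disjointTriangles

/-- For the graph consisting of `t ≥ 1` pairwise vertex-disjoint triangles (so `n = 3t`
vertices and edges), every bijective edge labeling by `{1, ..., n}` produces two vertex
sums differing by at least `2n/3 = 2t`. Hence this graph is not `δ`-approximately magic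
for any `δ < 2n/3`. -/
theorem disjoint_triangles_lower_bound (t : ℕ) (ht : 1 ≤ t)
    (f : Sym2 (Fin t × Fin 3) → ℕ)
    (hf : Set.BijOn f (disjointTriangles t).edgeSet (Set.Icc 1 (3 * t))) :
    ∃ u v : Fin t × Fin 3,
      vertexSum (disjointTriangles t) f u + 2 * t ≤
        vertexSum (disjointTriangles t) f v := by
  have : Nonempty (Fin t) := ⟨⟨0, ht⟩⟩
  obtain ⟨u, hu⟩ := Finite.exists_min (vertexSum (disjointTriangles t) f)
  obtain ⟨v, hv⟩ := Finite.exists_max (vertexSum (disjointTriangles t) f)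
  obtain ⟨e₁, he₁, hfe₁⟩ := hf.surjOn (show 1 ∈ Set.Icc 1 (3 * t) from ⟨le_rfl, by omega⟩)
  obtain ⟨eₙ, heₙ, hfeₙ⟩ := hf.surjOn (show 3 * t ∈ Set.Icc 1 (3 * t) from ⟨by omega, le_rfl⟩)
  obtain ⟨p, q, u₁, u₂, u₃, hu₁, hu₂, hu₃⟩ :=
    disjointTriangles.exists_vertexSums_of_mem_edgeSet f he₁
  obtain ⟨r, s, v₁, v₂, v₃, hv₁, hv₂, hv₃⟩ :=
    disjointTriangles.exists_vertexSums_of_mem_edgeSet f heₙ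
  have hspread := two_mul_add_three_mul_le_of_triangle_sums (hu₁ ▸ hu u₁) (hu₂ ▸ hu u₂) (hu₃ ▸ hv u₃)
    (hv₁ ▸ hv v₁) (hv₂ ▸ hv v₂) (hv₃ ▸ hu v₃)
  exact ⟨u, v, by omega⟩
end

section
/- Let k ≥ 1 and let G be a k-regular finite simple graph such that every connected component of G (viewed as a graph in its own right) is antimagic. Then G is antimagic. Equivalently, a disjoint union of finitely many antimagic k-regular graphs (all of the same degree k ≥ 1) is antimagic. -/
/-!
Order the components and give each one a consecutive block of labels, shifted by the
number of edges in earlier components, labelling inside the block by the component's own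
antimagic labeling. A vertex of degree `k` in a component with offset `a` then has vertex sum
`k * a` plus its vertex sum inside the component, which lies in `[k, k * m]` for a component
with `m` edges. Within a component the sums stay distinct; across components the ranges
`[k * (a + 1), k * (a + m)]` are disjoint because the next offset is at least `a + m`.
-/

open Finset

theorem Set.bijOn_Icc_of_injOn {β : Type*} {s : Set β} [Finite s] {f : β → ℕ}
    (hinj : Set.InjOn f s) (hmaps : Set.MapsTo f s (Set.Icc 1 (Nat.card s))) :
    Set.BijOn f s (Set.Icc 1 (Nat.card s)) := by
  refine ⟨hmaps, hinj, ?_⟩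
  have := Set.eq_of_subset_of_ncard_le hmaps.image_subset ?_ (Set.finite_Icc _ _)
  · exact this.symm.subset
  · rw [hinj.ncard_image, Nat.card_coe_set_eq]
    simp

section BlockOffset

variable {ι : Type*} [Fintype ι] [LinearOrder ι] (m : ι → ℕ)

def blockOffset (i : ι) : ℕ := ∑ j ∈ {j | j < i}, m j

variable {m}

theorem blockOffset_add_le_sum_of_forall_le_mem {i : ι} {s : Finset ι}
    (h : ∀ j ≤ i, j ∈ s) : blockOffset m i + m i ≤ ∑ j ∈ s, m j := by
  rw [blockOffset, add_comm, ← sum_insert (by simp)]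
  exact sum_le_sum_of_subset fun j hj => by
    rcases mem_insert.1 hj with rfl | hj
    exacts [h _ le_rfl, h _ (mem_filter.1 hj).2.le]

theorem blockOffset_add_le_of_lt {i j : ι} (h : i < j) :
    blockOffset m i + m i ≤ blockOffset m j :=
  blockOffset_add_le_sum_of_forall_le_mem fun _ hk => by simpa using hk.trans_lt h

theorem blockOffset_add_le_sum (i : ι) : blockOffset m i + m i ≤ ∑ j, m j :=
  blockOffset_add_le_sum_of_forall_le_mem fun _ _ => mem_univ _

end BlockOffset

namespace SimpleGraph

section VertexSum

variable {V : Type*} {G : SimpleGraph V}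

theorem bijOn_map_val_incidenceSet_induce {s : Set V} {v : V} (hv : v ∈ s)
    (hs : ∀ w, G.Adj v w → w ∈ s) :
    Set.BijOn (Sym2.map Subtype.val) ((G.induce s).incidenceSet ⟨v, hv⟩) (G.incidenceSet v) := by
  refine ⟨fun e he => ?_, (Sym2.map.injective Subtype.val_injective).injOn, fun ε hε => ?_⟩
  · exact ⟨(Embedding.induce s).map_mem_edgeSet_iff.2 he.1, Sym2.mem_map.2 ⟨_, he.2, rfl⟩⟩
  · obtain ⟨w, rfl⟩ := Sym2.mem_iff_exists.1 hε.2
    have hvw : G.Adj v w := hε.1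
    exact ⟨s(⟨v, hv⟩, ⟨w, hs w hvw⟩), ⟨hvw, Sym2.mem_mk_left _ _⟩, rfl⟩

variable [Finite V]

theorem card_toFinset_incidenceSet (v : V) :
    (G.incidenceSet v).toFinite.toFinset.card = Nat.card (G.neighborSet v) := by
  classical
  rw [← Set.ncard_eq_toFinset_card, ← Nat.card_coe_set_eq,
    Nat.card_congr (G.incidenceSetEquivNeighborSet v)]

theorem vertexSum_congr {f g : Sym2 V → ℕ} {v : V} (h : ∀ e ∈ G.incidenceSet v, f e = g e) :
    vertexSum G f v = vertexSum G g v :=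
  Finset.sum_congr rfl fun e he => h e ((Set.Finite.mem_toFinset _).1 he)

theorem vertexSum_const_add (a : ℕ) (f : Sym2 V → ℕ) (v : V) :
    vertexSum G (fun e => a + f e) v = Nat.card (G.neighborSet v) * a + vertexSum G f v := by
  rw [vertexSum, Finset.sum_add_distrib, Finset.sum_const, card_toFinset_incidenceSet,
    smul_eq_mul, vertexSum]

theorem vertexSum_mem_Icc {f : Sym2 V → ℕ} {v : V} {a b : ℕ}
    (h : Set.MapsTo f (G.incidenceSet v) (Set.Icc a b)) :
    vertexSum G f v ∈
      Set.Icc (Nat.card (G.neighborSet v) * a) (Nat.card (G.neighborSet v) * b) := by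
  have h' : ∀ e ∈ (G.incidenceSet v).toFinite.toFinset, f e ∈ Set.Icc a b :=
    fun e he => h ((Set.Finite.mem_toFinset _).1 he)
  rw [← card_toFinset_incidenceSet, vertexSum]
  exact ⟨by simpa using Finset.card_nsmul_le_sum _ _ _ fun e he => (h' e he).1,
    by simpa using Finset.sum_le_card_nsmul _ _ _ fun e he => (h' e he).2⟩

theorem vertexSum_induce {s : Set V} {v : V} (hv : v ∈ s) (hs : ∀ w, G.Adj v w → w ∈ s)
    (f : Sym2 V → ℕ) :
    vertexSum (G.induce s) (f ∘ Sym2.map Subtype.val) ⟨v, hv⟩ = vertexSum G f v := by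
  have h := bijOn_map_val_incidenceSet_induce hv hs
  simp only [vertexSum]
  refine Finset.sum_nbij _ (fun e he => ?_) ?_ ?_ fun _ _ => rfl <;>
    simp only [Set.Finite.coe_toFinset, Set.Finite.mem_toFinset] at *
  exacts [h.mapsTo he, h.injOn, h.surjOn]

theorem card_neighborSet_induce {s : Set V} {v : V} (hv : v ∈ s)
    (hs : ∀ w, G.Adj v w → w ∈ s) :
    Nat.card ((G.induce s).neighborSet ⟨v, hv⟩) = Nat.card (G.neighborSet v) := by
  simpa [vertexSum, card_toFinset_incidenceSet] using vertexSum_induce hv hs fun _ => 1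

end VertexSum

variable {V : Type*}

noncomputable def edgeSetSigmaEquiv (G : SimpleGraph V) :
    (Σ c : G.ConnectedComponent, (G.induce c.supp).edgeSet) ≃ G.edgeSet :=
  Equiv.ofBijective (fun p => ⟨p.2.1.map Subtype.val,
      (Embedding.induce p.1.supp).map_mem_edgeSet_iff.2 p.2.2⟩) <| by
    constructor
    · rintro ⟨c, e, he⟩ ⟨d, e', he'⟩ h
      replace h : e.map Subtype.val = e'.map Subtype.val := congrArg Subtype.val h
      obtain ⟨x, hx⟩ : ∃ x, x ∈ e := ⟨_, e.out_fst_mem⟩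
      obtain ⟨y, -, hyx⟩ := Sym2.mem_map.1 (h ▸ Sym2.mem_map.2 ⟨x, hx, rfl⟩)
      obtain rfl : c = d := ConnectedComponent.eq_of_common_vertex x.2 (hyx ▸ y.2)
      obtain rfl := Sym2.map.injective Subtype.val_injective h
      rfl
    · rintro ⟨ε, hε⟩
      induction ε using Sym2.ind with
      | _ u w =>
        have hw : w ∈ (G.connectedComponentMk u).supp :=
          (ConnectedComponent.connectedComponentMk_eq_of_adj hε).symm
        exact ⟨⟨G.connectedComponentMk u, s(⟨u, rfl⟩, ⟨w, hw⟩), hε⟩, rfl⟩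

noncomputable abbrev ConnectedComponent.numEdges {G : SimpleGraph V}
    (c : G.ConnectedComponent) : ℕ :=
  Nat.card (G.induce c.supp).edgeSet

section ComponentwiseLabel

variable {G : SimpleGraph V} [Fintype G.ConnectedComponent] [LinearOrder G.ConnectedComponent]

open Classical in
noncomputable def componentwiseLabel (f : ∀ c : G.ConnectedComponent, Sym2 c.supp → ℕ)
    (ε : Sym2 V) : ℕ :=
  if h : ε ∈ G.edgeSet then
    let p := G.edgeSetSigmaEquiv.symm ⟨ε, h⟩
    blockOffset ConnectedComponent.numEdges p.1 + f p.1 p.2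
  else 0

variable {f : ∀ c : G.ConnectedComponent, Sym2 c.supp → ℕ}

theorem componentwiseLabel_map_val {c : G.ConnectedComponent} {e : Sym2 c.supp}
    (he : e ∈ (G.induce c.supp).edgeSet) :
    componentwiseLabel f (e.map Subtype.val) =
      blockOffset ConnectedComponent.numEdges c + f c e := by
  have hmem : e.map Subtype.val ∈ G.edgeSet := (G.edgeSetSigmaEquiv ⟨c, e, he⟩).2
  have hsymm : G.edgeSetSigmaEquiv.symm ⟨_, hmem⟩ = ⟨c, e, he⟩ :=
    G.edgeSetSigmaEquiv.symm_apply_apply ⟨c, e, he⟩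
  rw [componentwiseLabel, dif_pos hmem]
  dsimp only
  rw [hsymm]

theorem vertexSum_componentwiseLabel [Finite V] {c : G.ConnectedComponent} {v : V}
    (hv : v ∈ c.supp) :
    vertexSum G (componentwiseLabel f) v = Nat.card (G.neighborSet v) *
      blockOffset ConnectedComponent.numEdges c + vertexSum (G.induce c.supp) (f c) ⟨v, hv⟩ := by
  have hs : ∀ w, G.Adj v w → w ∈ c.supp := fun _ => c.mem_supp_of_adj_mem_supp hv
  rw [← vertexSum_induce hv hs, ← card_neighborSet_induce hv hs, ← vertexSum_const_add]
  exact vertexSum_congr fun e he => componentwiseLabel_map_val he.1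

variable (hf : ∀ c : G.ConnectedComponent,
  Set.BijOn (f c) (G.induce c.supp).edgeSet (Set.Icc 1 c.numEdges))
include hf

theorem componentwiseLabel_map_val_mem_Icc {c : G.ConnectedComponent} {e : Sym2 c.supp}
    (he : e ∈ (G.induce c.supp).edgeSet) :
    componentwiseLabel f (e.map Subtype.val) ∈
      Set.Icc (blockOffset ConnectedComponent.numEdges c + 1)
        (blockOffset ConnectedComponent.numEdges c + c.numEdges) := by
  rw [componentwiseLabel_map_val he]
  obtain ⟨h1, h2⟩ := (hf c).mapsTo he
  constructor <;> omega

theorem componentwiseLabel_lt_of_lt {c d : G.ConnectedComponent} {e : Sym2 c.supp}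
    {e' : Sym2 d.supp} (he : e ∈ (G.induce c.supp).edgeSet)
    (he' : e' ∈ (G.induce d.supp).edgeSet) (hcd : c < d) :
    componentwiseLabel f (e.map Subtype.val) < componentwiseLabel f (e'.map Subtype.val) := by
  calc componentwiseLabel f (e.map Subtype.val)
      _ ≤ blockOffset ConnectedComponent.numEdges c + c.numEdges :=
        (componentwiseLabel_map_val_mem_Icc hf he).2
      _ ≤ blockOffset ConnectedComponent.numEdges d := blockOffset_add_le_of_lt hcd
      _ < componentwiseLabel f (e'.map Subtype.val) :=
        (componentwiseLabel_map_val_mem_Icc hf he').1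

theorem componentwiseLabel_injOn : Set.InjOn (componentwiseLabel f) G.edgeSet := by
  intro ε hε ε' hε' h
  obtain ⟨⟨c, e, he⟩, hp⟩ := G.edgeSetSigmaEquiv.surjective ⟨ε, hε⟩
  obtain ⟨⟨d, e', he'⟩, hp'⟩ := G.edgeSetSigmaEquiv.surjective ⟨ε', hε'⟩
  obtain rfl : e.map Subtype.val = ε := congrArg Subtype.val hp
  obtain rfl : e'.map Subtype.val = ε' := congrArg Subtype.val hp'
  rcases lt_trichotomy c d with hcd | rfl | hcd
  · exact absurd h (componentwiseLabel_lt_of_lt hf he he' hcd).ne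
  · rw [componentwiseLabel_map_val he, componentwiseLabel_map_val he', add_right_inj] at h
    rw [(hf c).injOn he he' h]
  · exact absurd h (componentwiseLabel_lt_of_lt hf he' he hcd).ne'

theorem componentwiseLabel_bijOn [Finite V] :
    Set.BijOn (componentwiseLabel f) G.edgeSet (Set.Icc 1 (Nat.card G.edgeSet)) := by
  have hcard : Nat.card G.edgeSet = ∑ c : G.ConnectedComponent, c.numEdges := by
    rw [← Nat.card_congr G.edgeSetSigmaEquiv, Nat.card_sigma]
  refine Set.bijOn_Icc_of_injOn (componentwiseLabel_injOn hf) fun ε hε => ?_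
  obtain ⟨⟨c, e, he⟩, hp⟩ := G.edgeSetSigmaEquiv.surjective ⟨ε, hε⟩
  obtain rfl : e.map Subtype.val = ε := congrArg Subtype.val hp
  obtain ⟨h1, h2⟩ := componentwiseLabel_map_val_mem_Icc hf he
  exact ⟨by omega, hcard ▸ h2.trans (blockOffset_add_le_sum c)⟩

theorem vertexSum_componentwiseLabel_mem_Icc [Finite V] {c : G.ConnectedComponent} {v : V}
    (hv : v ∈ c.supp) :
    vertexSum G (componentwiseLabel f) v ∈
      Set.Icc (Nat.card (G.neighborSet v) * (blockOffset ConnectedComponent.numEdges c + 1))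
        (Nat.card (G.neighborSet v) *
          (blockOffset ConnectedComponent.numEdges c + c.numEdges)) := by
  have hs : ∀ w, G.Adj v w → w ∈ c.supp := fun _ => c.mem_supp_of_adj_mem_supp hv
  obtain ⟨h1, h2⟩ := vertexSum_mem_Icc (G := G.induce c.supp) (v := ⟨v, hv⟩) (f := f c)
    fun e he => (hf c).mapsTo he.1
  rw [card_neighborSet_induce hv hs] at h1 h2
  rw [vertexSum_componentwiseLabel hv, mul_add, mul_add]
  exact ⟨by omega, by omega⟩

theorem vertexSum_componentwiseLabel_lt_of_lt [Finite V] {c d : G.ConnectedComponent}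
    {u v : V} (hu : u ∈ c.supp) (hv : v ∈ d.supp) (hcd : c < d)
    (hdeg : Nat.card (G.neighborSet u) ≤ Nat.card (G.neighborSet v))
    (hpos : 0 < Nat.card (G.neighborSet v)) :
    vertexSum G (componentwiseLabel f) u < vertexSum G (componentwiseLabel f) v := by
  calc vertexSum G (componentwiseLabel f) u
      _ ≤ Nat.card (G.neighborSet u) *
          (blockOffset ConnectedComponent.numEdges c + c.numEdges) :=
        (vertexSum_componentwiseLabel_mem_Icc hf hu).2
      _ ≤ Nat.card (G.neighborSet v) * blockOffset ConnectedComponent.numEdges d :=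
        Nat.mul_le_mul hdeg (blockOffset_add_le_of_lt hcd)
      _ < Nat.card (G.neighborSet v) * (blockOffset ConnectedComponent.numEdges d + 1) := by
        rw [mul_add_one]; omega
      _ ≤ vertexSum G (componentwiseLabel f) v := (vertexSum_componentwiseLabel_mem_Icc hf hv).1

end ComponentwiseLabel

end SimpleGraph

open SimpleGraph in
/-- If `G` is `k`-regular with `k ≥ 1` and every connected component of `G` (as a graph
in its own right) is antimagic, then `G` is antimagic. -/
theorem regular_components_antimagic {V : Type} [Finite V] {k : ℕ}
    (G : SimpleGraph V)
    (hreg : ∀ v : V, Nat.card (G.neighborSet v) = k) (hk : 1 ≤ k)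
    (hcomp : ∀ c : G.ConnectedComponent, IsAntimagic (G.induce c.supp)) :
    IsAntimagic G := by
  have : Fintype G.ConnectedComponent := Fintype.ofFinite _
  let : LinearOrder G.ConnectedComponent :=
    LinearOrder.lift' _ (Fintype.equivFin G.ConnectedComponent).injective
  choose f hf hdistinct using hcomp
  refine ⟨componentwiseLabel f, componentwiseLabel_bijOn hf, fun u v huv => ?_⟩
  have hlt {u v : V} (h : G.connectedComponentMk u < G.connectedComponentMk v) :=
    vertexSum_componentwiseLabel_lt_of_lt hf rfl rfl h (by rw [hreg, hreg])
      (by rw [hreg]; omega)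
  rcases lt_trichotomy (G.connectedComponentMk u) (G.connectedComponentMk v) with h | h | h
  · exact (hlt h).ne
  · have hv : v ∈ (G.connectedComponentMk u).supp := h.symm
    rw [vertexSum_componentwiseLabel rfl, vertexSum_componentwiseLabel hv, hreg, hreg, Ne,
      add_right_inj]
    exact hdistinct _ _ _ fun h => huv (congrArg Subtype.val h)
  · exact (hlt h).ne'
end
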